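/- arXiv:2212.11249 — 6 statements merged into one kernel-verified Lean document; each statement's English description precedes it below -/
import Mathlib

section
/- Let (Ω,Σ,μ) be a σ-finite measure space, p ∈ [1,∞), and let x_a, x_b : Ω → [-∞,∞] be measurable with K := {x ∈ L^p(μ) : x_a ≤ x ≤ x_b μ-a.e.} nonempty. Then for every x ∈ K, the tangent cone of K at x equals {h ∈ L^p(μ) : h ≥ 0 μ-a.e. on {x_a = x} and h ≤ 0 μ-a.e. on {x_b = x}}. -/
open MeasureTheory Filter Topology Pointwise
open scoped ENNReal Classical

noncomputable section

/-- Bouligand tangent cone of a set `C` at `x`. -/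
def bouligandTangentCone {E : Type*} [NormedAddCommGroup E] [NormedSpace ℝ E]
    (C : Set E) (x : E) : Set E :=
  {d | ∃ (xs : ℕ → E) (t : ℕ → ℝ), (∀ k, xs k ∈ C) ∧ (∀ k, 0 < t k) ∧
      Tendsto xs atTop (𝓝 x) ∧ Tendsto t atTop (𝓝 0) ∧
      Tendsto (fun k => (t k)⁻¹ • (xs k - x)) atTop (𝓝 d)}

/-- The duality pairing between `L^q(μ)` and `L^p(μ)`. -/
def pairing {Ω : Type*} [MeasurableSpace Ω] (μ : Measure Ω) {q p : ℝ≥0∞}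
    (y : Lp ℝ q μ) (x : Lp ℝ p μ) : ℝ := ∫ ω, y ω * x ω ∂μ

/-- The polar of a subset of `L^p(μ)`, taken in `L^q(μ)`. -/
def polarCone {Ω : Type*} [MeasurableSpace Ω] (μ : Measure Ω) (p q : ℝ≥0∞)
    (S : Set (Lp ℝ p μ)) : Set (Lp ℝ q μ) :=
  {y | ∀ s ∈ S, pairing μ y s ≤ 0}

/-- The normal cone: polar of the Bouligand tangent cone, taken in `L^q(μ)`. -/
def normalCone {Ω : Type*} [MeasurableSpace Ω] (μ : Measure Ω) (p q : ℝ≥0∞)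
    [Fact (1 ≤ p)] (C : Set (Lp ℝ p μ)) (x : Lp ℝ p μ) : Set (Lp ℝ q μ) :=
  polarCone μ p q (bouligandTangentCone C x)

private lemma aux_measurableSet_le_ereal {Ω : Type*} [MeasurableSpace Ω] {f g : Ω → EReal}
    (hf : Measurable f) (hg : Measurable g) : MeasurableSet {ω | f ω ≤ g ω} :=
  measurableSet_le hf hg

private lemma aux_tendsto_eLpNorm_zero {Ω : Type*} [MeasurableSpace Ω] {μ : Measure Ω}
    {p : ℝ≥0∞} (hp0 : p ≠ 0) (hp' : p ≠ ∞) {g : ℕ → Ω → ℝ}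
    (hg : ∀ n, AEStronglyMeasurable (g n) μ) {bound : Ω → ℝ}
    (hbound : MemLp bound p μ)
    (hle : ∀ n, ∀ᵐ ω ∂μ, |g n ω| ≤ |bound ω|)
    (hzero : ∀ᵐ ω ∂μ, Tendsto (fun n => g n ω) atTop (𝓝 0)) :
    Tendsto (fun n => eLpNorm (g n) p μ) atTop (𝓝 0) := by
  have hr : 0 < p.toReal := ENNReal.toReal_pos hp0 hp'
  have key : Tendsto (fun n => ∫⁻ ω, (‖g n ω‖₊ : ℝ≥0∞) ^ p.toReal ∂μ) atTop (𝓝 0) := by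
    have h0 : (0 : ℝ≥0∞) = ∫⁻ ω, (fun _ : Ω => (0:ℝ≥0∞)) ω ∂μ := by simp
    rw [h0]
    refine tendsto_lintegral_of_dominated_convergence'
      (fun ω => (‖bound ω‖₊ : ℝ≥0∞) ^ p.toReal)
      (fun n => (hg n).enorm.pow_const p.toReal) ?_ ?_ ?_
    · intro n
      filter_upwards [hle n] with ω hω
      refine ENNReal.rpow_le_rpow ?_ hr.le
      rw [ENNReal.coe_le_coe]
      have : ‖g n ω‖ ≤ ‖bound ω‖ := by simpa [Real.norm_eq_abs] using hω
      exact this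
    · have h2 := hbound.2
      rw [eLpNorm_eq_lintegral_rpow_enorm_toReal hp0 hp'] at h2
      intro hcon
      rw [show (∫⁻ x, ‖bound x‖ₑ ^ p.toReal ∂μ) = ∞ from hcon] at h2
      rw [ENNReal.top_rpow_of_pos (by positivity)] at h2
      exact (lt_irrefl _ h2).elim
    · filter_upwards [hzero] with ω hω
      have h1 : Tendsto (fun n => (‖g n ω‖₊ : ℝ≥0∞)) atTop (𝓝 0) := by
        rw [← ENNReal.coe_zero]
        rw [ENNReal.tendsto_coe]
        have := (continuous_nnnorm.tendsto (0:ℝ)).comp hω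
        simpa [Function.comp_def] using this
      have h2 := (ENNReal.continuous_rpow_const (y := p.toReal)).tendsto 0 |>.comp h1
      rw [ENNReal.zero_rpow_of_pos hr] at h2
      exact h2
  have hfin : ∀ n, eLpNorm (g n) p μ = (∫⁻ ω, (‖g n ω‖₊ : ℝ≥0∞) ^ p.toReal ∂μ) ^ (1/p.toReal) :=
    fun n => eLpNorm_eq_lintegral_rpow_enorm_toReal hp0 hp'
  simp_rw [hfin]
  have hfinal := (ENNReal.continuous_rpow_const (y := 1/p.toReal)).tendsto 0 |>.comp key
  rw [ENNReal.zero_rpow_of_pos (by positivity)] at hfinal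
  exact hfinal

theorem tangent_cone_of_box_constraints
    {Ω : Type*} [MeasurableSpace Ω] (μ : Measure Ω) [SigmaFinite μ]
    (p : ℝ≥0∞) [Fact (1 ≤ p)] (hp : 1 ≤ p) (hp' : p ≠ ∞)
    (xa xb : Ω → EReal) (hxa : Measurable xa) (hxb : Measurable xb)
    (K : Set (Lp ℝ p μ))
    (hK : K = {y : Lp ℝ p μ | ∀ᵐ ω ∂μ, xa ω ≤ (y ω : EReal) ∧ (y ω : EReal) ≤ xb ω})
    (hKne : K.Nonempty) (x : Lp ℝ p μ) (hx : x ∈ K) :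
    bouligandTangentCone K x =
      {h : Lp ℝ p μ |
        (∀ᵐ ω ∂μ, xa ω = (x ω : EReal) → 0 ≤ h ω) ∧
        (∀ᵐ ω ∂μ, xb ω = (x ω : EReal) → h ω ≤ 0)} := by
  have hp0 : p ≠ 0 := (zero_lt_one.trans_le hp).ne'
  rw [hK] at hx
  ext h
  simp only [Set.mem_setOf_eq]
  constructor
  · rintro ⟨xs, t, hmem, hpos, -, -, hlim⟩
    have hv := tendstoInMeasure_of_tendsto_Lp hlim
    obtain ⟨ns, -, hae⟩ := hv.exists_seq_tendsto_ae
    have hcoe : ∀ k, ∀ᵐ ω ∂μ,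
        (((t k)⁻¹ • (xs k - x) : Lp ℝ p μ) : Ω → ℝ) ω = (t k)⁻¹ * (xs k ω - x ω) := by
      intro k
      filter_upwards [Lp.coeFn_smul ((t k)⁻¹) (xs k - x), Lp.coeFn_sub (xs k) x] with ω h1 h2
      rw [h1, Pi.smul_apply, h2, Pi.sub_apply, smul_eq_mul]
    have hmem' : ∀ k, ∀ᵐ ω ∂μ, xa ω ≤ ((xs k) ω : EReal) ∧ ((xs k) ω : EReal) ≤ xb ω := by
      intro k
      have := hmem k
      rw [hK] at this
      exact this
    constructor
    · filter_upwards [hae, ae_all_iff.mpr hcoe, ae_all_iff.mpr hmem'] with ω h1 h2 h3 heq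
      refine ge_of_tendsto' h1 fun i => ?_
      rw [h2 (ns i)]
      have hge : x ω ≤ xs (ns i) ω := by
        have := (h3 (ns i)).1
        rw [heq] at this
        exact_mod_cast this
      exact mul_nonneg (inv_nonneg.mpr (hpos (ns i)).le) (by linarith)
    · filter_upwards [hae, ae_all_iff.mpr hcoe, ae_all_iff.mpr hmem'] with ω h1 h2 h3 heq
      refine le_of_tendsto' h1 fun i => ?_
      rw [h2 (ns i)]
      have hge : xs (ns i) ω ≤ x ω := by
        have := (h3 (ns i)).2
        rw [heq] at this
        exact_mod_cast this
      have hti : (0:ℝ) ≤ (t (ns i))⁻¹ := (inv_nonneg.mpr (hpos (ns i)).le)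
      nlinarith
  · rintro ⟨h1, h2⟩
    set t : ℕ → ℝ := fun n => ((n:ℝ)+1)⁻¹ with htdef
    have htpos : ∀ n, 0 < t n := fun n => by positivity
    have ht0 : Tendsto t atTop (𝓝 0) := by
      simpa [htdef, one_div] using tendsto_one_div_add_atTop_nhds_zero_nat (𝕜 := ℝ)
    have hxm : Measurable (⇑x) := (Lp.stronglyMeasurable x).measurable
    have hhm : Measurable (⇑h) := (Lp.stronglyMeasurable h).measurable
    set A : ℕ → Set Ω := fun n =>
      {ω | xa ω ≤ ((x ω + t n * h ω : ℝ) : EReal) ∧ ((x ω + t n * h ω : ℝ) : EReal) ≤ xb ω}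
      with hAdef
    have hA : ∀ n, MeasurableSet (A n) := by
      intro n
      have hm : Measurable fun ω => ((x ω + t n * h ω : ℝ) : EReal) :=
        measurable_coe_real_ereal.comp (hxm.add (measurable_const.mul hhm))
      exact (aux_measurableSet_le_ereal hxa hm).inter (aux_measurableSet_le_ereal hm hxb)
    set g : ℕ → Ω → ℝ := fun n => (A n).indicator ⇑h with hgdef
    have hgm : ∀ n, MemLp (g n) p μ := fun n => (Lp.memLp h).indicator (hA n)
    set v : ℕ → Lp ℝ p μ := fun n => (hgm n).toLp (g n) with hvdef
    have hcv : ∀ n, (⇑(v n) : Ω → ℝ) =ᵐ[μ] g n := fun n => (hgm n).coeFn_toLp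
    refine ⟨fun n => x + t n • v n, t, ?_, htpos, ?_, ht0, ?_⟩
    · intro n
      rw [hK]
      have hcoe : ∀ᵐ ω ∂μ, ((x + t n • v n : Lp ℝ p μ) : Ω → ℝ) ω = x ω + t n * g n ω := by
        filter_upwards [Lp.coeFn_add x (t n • v n), Lp.coeFn_smul (t n) (v n), hcv n]
          with ω ha hb hc
        rw [ha, Pi.add_apply, hb]
        simp [hc]
      filter_upwards [hx, hcoe] with ω hω hc
      rw [hc]
      by_cases hmem : ω ∈ A n
      · have := hmem
        rw [hAdef] at this
        simpa [hgdef, Set.indicator_of_mem hmem] using this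
      · simp only [hgdef, Set.indicator_of_notMem hmem, mul_zero, add_zero]
        exact hω
    · -- Tendsto (fun n => x + t n • v n) atTop (𝓝 x)
      have hvb : ∀ n, ‖v n‖ ≤ ‖h‖ := by
        intro n
        rw [show v n = (hgm n).toLp (g n) from rfl, Lp.norm_toLp, Lp.norm_def]
        refine ENNReal.toReal_mono (Lp.eLpNorm_ne_top h) ?_
        exact eLpNorm_indicator_le _
      rw [tendsto_iff_norm_sub_tendsto_zero]
      have hb : ∀ n, ‖(x + t n • v n) - x‖ ≤ t n * ‖h‖ := by
        intro n
        have : (x + t n • v n) - x = t n • v n := by abel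
        rw [this, norm_smul, Real.norm_eq_abs, abs_of_pos (htpos n)]
        exact mul_le_mul_of_nonneg_left (hvb n) (htpos n).le
      refine squeeze_zero (fun n => norm_nonneg _) hb ?_
      simpa using ht0.mul_const ‖h‖
    · -- Tendsto quotient
      have heqseq : ∀ n, (t n)⁻¹ • ((x + t n • v n) - x) = v n := by
        intro n
        have : (x + t n • v n) - x = t n • v n := by abel
        rw [this, smul_smul, inv_mul_cancel₀ (htpos n).ne', one_smul]
      simp_rw [heqseq]
      rw [Lp.tendsto_Lp_iff_tendsto_eLpNorm']
      have hcongr : ∀ n, eLpNorm (⇑(v n) - ⇑h) p μ = eLpNorm (g n - ⇑h) p μ := by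
        intro n
        exact eLpNorm_congr_ae ((hcv n).sub (EventuallyEq.refl _ _))
      simp_rw [hcongr]
      refine aux_tendsto_eLpNorm_zero hp0 hp'
        (fun n => ((hgm n).aestronglyMeasurable.sub (Lp.memLp h).aestronglyMeasurable))
        (Lp.memLp h) ?_ ?_
      · intro n
        refine Eventually.of_forall fun ω => ?_
        by_cases hmem : ω ∈ A n
        · simp [hgdef, Set.indicator_of_mem hmem, abs_nonneg]
        · simp [hgdef, Set.indicator_of_notMem hmem]
      · filter_upwards [hx, h1, h2] with ω hω hω1 hω2
        -- find c > 0 such that for 0 < s ≤ c, the point stays in the box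
        have hupper : ∃ c : ℝ, 0 < c ∧ ∀ s : ℝ, 0 < s → s ≤ c →
            ((x ω + s * h ω : ℝ) : EReal) ≤ xb ω := by
          rcases le_or_gt (h ω) 0 with hh | hh
          · refine ⟨1, one_pos, fun s hs hsc => ?_⟩
            refine le_trans ?_ hω.2
            exact_mod_cast (by nlinarith : x ω + s * h ω ≤ x ω)
          · have hne : xb ω ≠ (x ω : EReal) := fun e => absurd (hω2 e) (not_le.mpr hh)
            have hlt : ((x ω : EReal)) < xb ω := lt_of_le_of_ne hω.2 (fun e => hne e.symm)
            by_cases htop : xb ω = ⊤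
            · exact ⟨1, one_pos, fun s _ _ => by simp [htop]⟩
            · have hbot : xb ω ≠ ⊥ := fun e => by
                rw [e] at hlt; exact absurd hlt (by simp)
              have hxb' : ((xb ω).toReal : EReal) = xb ω := EReal.coe_toReal htop hbot
              have hxblt : x ω < (xb ω).toReal := by
                rw [← hxb'] at hlt
                exact_mod_cast hlt
              refine ⟨((xb ω).toReal - x ω) / (h ω), div_pos (by linarith) hh, fun s hs hsc => ?_⟩
              rw [← hxb']
              have : x ω + s * h ω ≤ (xb ω).toReal := by
                have := (le_div_iff₀ hh).mp hsc
                nlinarith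
              exact_mod_cast this
        have hlower : ∃ c : ℝ, 0 < c ∧ ∀ s : ℝ, 0 < s → s ≤ c →
            xa ω ≤ ((x ω + s * h ω : ℝ) : EReal) := by
          rcases le_or_gt 0 (h ω) with hh | hh
          · refine ⟨1, one_pos, fun s hs hsc => ?_⟩
            refine le_trans hω.1 ?_
            exact_mod_cast (by nlinarith : x ω ≤ x ω + s * h ω)
          · have hne : xa ω ≠ (x ω : EReal) := fun e => absurd (hω1 e) (not_le.mpr hh)
            have hlt : xa ω < ((x ω : EReal)) := lt_of_le_of_ne hω.1 hne
            by_cases hbot : xa ω = ⊥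
            · exact ⟨1, one_pos, fun s _ _ => by simp [hbot]⟩
            · have htop : xa ω ≠ ⊤ := fun e => by
                rw [e] at hlt; exact absurd hlt (by simp)
              have hxa' : ((xa ω).toReal : EReal) = xa ω := EReal.coe_toReal htop hbot
              have hxalt : (xa ω).toReal < x ω := by
                rw [← hxa'] at hlt
                exact_mod_cast hlt
              refine ⟨(x ω - (xa ω).toReal) / (-h ω), div_pos (by linarith) (by linarith), fun s hs hsc => ?_⟩
              rw [← hxa']
              have : (xa ω).toReal ≤ x ω + s * h ω := by
                have := (le_div_iff₀ (by linarith : (0:ℝ) < -h ω)).mp hsc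
                nlinarith
              exact_mod_cast this
        obtain ⟨c1, hc1, hH1⟩ := hupper
        obtain ⟨c2, hc2, hH2⟩ := hlower
        have hev : ∀ᶠ n in atTop, g n ω - h ω = 0 := by
          filter_upwards [ht0.eventually (gt_mem_nhds (lt_min hc1 hc2))] with n hn
          have hmem : ω ∈ A n := by
            rw [hAdef]
            exact ⟨hH2 (t n) (htpos n) (le_of_lt (lt_of_lt_of_le hn (min_le_right _ _))),
                   hH1 (t n) (htpos n) (le_of_lt (lt_of_lt_of_le hn (min_le_left _ _)))⟩
          simp [hgdef, Set.indicator_of_mem hmem]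
        refine Tendsto.congr' ?_ (tendsto_const_nhds (x := (0:ℝ)))
        filter_upwards [hev] with n hn
        simp only [Pi.sub_apply]
        exact hn.symm
end
end

section
/- Let (Ω,Σ,μ) be σ-finite, p ∈ [1,∞], and K := {x ∈ L^p(μ) : x_a ≤ x ≤ x_b μ-a.e.} nonempty, x ∈ K. For every ε > 0, every h ∈ L^∞(μ) ∩ L^p(μ) satisfying h ≥ 0 μ-a.e. on {x_a + ε ≥ x} and h ≤ 0 μ-a.e. on {x_b − ε ≤ x} belongs to the tangent cone T_K(x); moreover every element h of T_K(x) satisfies h ≥ 0 μ-a.e. on {x_a = x} and h ≤ 0 μ-a.e. on {x_b = x}. -/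
/-!
A feasible direction is tangent: if `x + t • h ∈ K` for all small `t > 0`, then `h` is tangent.
For `h` essentially bounded by `M` and `t ≤ ε / (M + 1)`, the perturbation `t h` moves `x` by
less than `ε`, so it can only violate a bound where `x` is `ε`-close to it, and there `h` has the
right sign. Conversely, a tangent direction is an `L^p`-limit of difference quotients
`(x_k - x) / t_k`, which are `≥ 0` a.e. on `{x_a = x}` and `≤ 0` a.e. on `{x_b = x}`; an a.e.
convergent subsequence carries these signs over to the limit.
-/

open MeasureTheory Filter Topology Pointwise
open scoped ENNReal Classical

noncomputable section

open Set

lemma mem_bouligandTangentCone_of_add_smul_mem {E : Type*} [NormedAddCommGroup E]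
    [NormedSpace ℝ E] {C : Set E} {x d : E} {δ : ℝ} (hδ : 0 < δ)
    (hC : ∀ t ∈ Ioo 0 δ, x + t • d ∈ C) : d ∈ bouligandTangentCone C x := by
  obtain ⟨t, -, ht_mem, ht⟩ := exists_seq_strictAnti_tendsto' hδ
  refine ⟨fun k => x + t k • d, t, fun k => hC _ (ht_mem k), fun k => (ht_mem k).1, ?_, ht, ?_⟩
  · simpa using (ht.smul_const d).const_add x
  · have hquot : ∀ k, (t k)⁻¹ • (x + t k • d - x) = d := fun k => by
      rw [add_sub_cancel_left, smul_smul, inv_mul_cancel₀ (ht_mem k).1.ne', one_smul]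
    simp only [hquot, tendsto_const_nhds]

lemma ae_mem_of_mem_bouligandTangentCone {Ω : Type*} [MeasurableSpace Ω] {μ : Measure Ω}
    {p : ℝ≥0∞} [Fact (1 ≤ p)] {C : Set (Lp ℝ p μ)} {x h : Lp ℝ p μ} {P : Ω → Prop}
    {S : Set ℝ} (hS : IsClosed S) (hS_smul : ∀ c : ℝ, 0 < c → ∀ r ∈ S, c * r ∈ S)
    (hC : ∀ y ∈ C, ∀ᵐ ω ∂μ, P ω → y ω - x ω ∈ S) (hh : h ∈ bouligandTangentCone C x) :
    ∀ᵐ ω ∂μ, P ω → h ω ∈ S := by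
  obtain ⟨xs, t, hxs, ht, -, -, hlim⟩ := hh
  obtain ⟨ns, -, hae⟩ := (tendstoInMeasure_of_tendsto_Lp hlim).exists_seq_tendsto_ae
  have hquot : ∀ᵐ ω ∂μ, ∀ k, ((t k)⁻¹ • (xs k - x)) ω = (t k)⁻¹ * (xs k ω - x ω) :=
    ae_all_iff.2 fun k => by
      filter_upwards [Lp.coeFn_smul (t k)⁻¹ (xs k - x), Lp.coeFn_sub (xs k) x] with ω h1 h2
      rw [h1, Pi.smul_apply, h2, Pi.sub_apply, smul_eq_mul]
  filter_upwards [ae_all_iff.2 fun k => hC _ (hxs k), hquot, hae] with ω hxsω hquotω hlimω hP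
  refine hS.mem_of_tendsto hlimω (Eventually.of_forall fun i => ?_)
  rw [hquotω]
  exact hS_smul _ (inv_pos.2 (ht _)) _ (hxsω _ hP)

namespace EReal

lemma le_coe_add_of_abs_le {a : EReal} {x s ε : ℝ} (hax : a ≤ x) (hs : |s| ≤ ε)
    (hs_nonneg : (x : EReal) ≤ a + ε → 0 ≤ s) : a ≤ ((x + s : ℝ) : EReal) := by
  by_cases hnear : (x : EReal) ≤ a + ε
  · exact hax.trans (EReal.coe_le_coe (by linarith [hs_nonneg hnear]))
  · have hfar : a ≤ ((x - ε : ℝ) : EReal) := by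
      rw [coe_sub, le_sub_iff_add_le (.inl (coe_ne_bot ε)) (.inl (coe_ne_top ε))]
      exact (not_le.1 hnear).le
    exact hfar.trans (EReal.coe_le_coe (by linarith [neg_abs_le s]))

lemma coe_add_le_of_abs_le {b : EReal} {x s ε : ℝ} (hxb : (x : EReal) ≤ b) (hs : |s| ≤ ε)
    (hs_nonpos : b - ε ≤ x → s ≤ 0) : ((x + s : ℝ) : EReal) ≤ b := by
  by_cases hnear : b - ε ≤ x
  · exact (EReal.coe_le_coe (by linarith [hs_nonpos hnear])).trans hxb
  · have hfar : ((x + ε : ℝ) : EReal) ≤ b := by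
      rw [coe_add, ← le_sub_iff_add_le (.inl (coe_ne_bot ε)) (.inl (coe_ne_top ε))]
      exact (not_le.1 hnear).le
    exact (EReal.coe_le_coe (by linarith [le_abs_self s])).trans hfar

end EReal

lemma ae_bounds_add_smul {Ω : Type*} [MeasurableSpace Ω] {μ : Measure Ω} {p : ℝ≥0∞}
    {xa xb : Ω → EReal} {x h : Lp ℝ p μ} {t ε : ℝ} (ht : 0 < t)
    (hx : ∀ᵐ ω ∂μ, xa ω ≤ (x ω : EReal) ∧ (x ω : EReal) ≤ xb ω)
    (hth : ∀ᵐ ω ∂μ, |t * h ω| ≤ ε)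
    (hA : ∀ᵐ ω ∂μ, (x ω : EReal) ≤ xa ω + (ε : EReal) → 0 ≤ h ω)
    (hB : ∀ᵐ ω ∂μ, xb ω - (ε : EReal) ≤ (x ω : EReal) → h ω ≤ 0) :
    ∀ᵐ ω ∂μ, xa ω ≤ ((x + t • h) ω : EReal) ∧ ((x + t • h) ω : EReal) ≤ xb ω := by
  filter_upwards [hx, hth, hA, hB, Lp.coeFn_add x (t • h), Lp.coeFn_smul t h]
    with ω hxω hthω hAω hBω h1 h2
  rw [h1, Pi.add_apply, h2, Pi.smul_apply, smul_eq_mul]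
  exact ⟨EReal.le_coe_add_of_abs_le hxω.1 hthω fun hω => mul_nonneg ht.le (hAω hω),
    EReal.coe_add_le_of_abs_le hxω.2 hthω fun hω => mul_nonpos_of_nonneg_of_nonpos ht.le (hBω hω)⟩

theorem tangent_cone_estimates_of_box_constraints_general
    {Ω : Type*} [MeasurableSpace Ω] (μ : Measure Ω)
    (p : ℝ≥0∞) [Fact (1 ≤ p)]
    (xa xb : Ω → EReal)
    (K : Set (Lp ℝ p μ))
    (hK : K = {y : Lp ℝ p μ | ∀ᵐ ω ∂μ, xa ω ≤ (y ω : EReal) ∧ (y ω : EReal) ≤ xb ω})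
    (x : Lp ℝ p μ) (hx : x ∈ K) :
    (∀ ε : ℝ, 0 < ε → ∀ h : Lp ℝ p μ, MemLp (⇑h) ∞ μ →
      (∀ᵐ ω ∂μ, (x ω : EReal) ≤ xa ω + (ε : EReal) → 0 ≤ h ω) →
      (∀ᵐ ω ∂μ, xb ω - (ε : EReal) ≤ (x ω : EReal) → h ω ≤ 0) →
      h ∈ bouligandTangentCone K x) ∧
    (∀ h : Lp ℝ p μ, h ∈ bouligandTangentCone K x →
      (∀ᵐ ω ∂μ, xa ω = (x ω : EReal) → 0 ≤ h ω) ∧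
      (∀ᵐ ω ∂μ, xb ω = (x ω : EReal) → h ω ≤ 0)) := by
  subst hK
  refine ⟨fun ε hε h hh_bdd hA hB => ?_, fun h hh => ⟨?_, ?_⟩⟩
  · set M := lpNorm h ∞ μ
    have hM : 0 ≤ M := lpNorm_nonneg
    refine mem_bouligandTangentCone_of_add_smul_mem (δ := ε / (M + 1)) (by positivity)
      fun t ht => ae_bounds_add_smul ht.1 hx ?_ hA hB
    filter_upwards [ae_le_lpNorm_exponent_top hh_bdd] with ω hω
    calc |t * h ω| = t * ‖h ω‖ := by rw [abs_mul, abs_of_pos ht.1, Real.norm_eq_abs]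
      _ ≤ ε / (M + 1) * (M + 1) := by gcongr; exacts [ht.2.le, by linarith]
      _ = ε := div_mul_cancel₀ ε (by positivity)
  · refine ae_mem_of_mem_bouligandTangentCone isClosed_Ici
      (fun c hc r hr => mul_nonneg hc.le hr) (fun y hy => ?_) hh
    filter_upwards [hy] with ω hyω hxaω
    exact sub_nonneg.2 (EReal.coe_le_coe_iff.1 (hxaω ▸ hyω.1))
  · refine ae_mem_of_mem_bouligandTangentCone isClosed_Iic
      (fun c hc r hr => mul_nonpos_of_nonneg_of_nonpos hc.le hr) (fun y hy => ?_) hh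
    filter_upwards [hy] with ω hyω hxbω
    exact sub_nonpos.2 (EReal.coe_le_coe_iff.1 (hxbω ▸ hyω.2))

theorem tangent_cone_estimates_of_box_constraints
    {Ω : Type*} [MeasurableSpace Ω] (μ : Measure Ω) [SigmaFinite μ]
    (p : ℝ≥0∞) [Fact (1 ≤ p)] (hp : 1 ≤ p)
    (xa xb : Ω → EReal) (hxa : Measurable xa) (hxb : Measurable xb)
    (K : Set (Lp ℝ p μ))
    (hK : K = {y : Lp ℝ p μ | ∀ᵐ ω ∂μ, xa ω ≤ (y ω : EReal) ∧ (y ω : EReal) ≤ xb ω})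
    (hKne : K.Nonempty) (x : Lp ℝ p μ) (hx : x ∈ K) :
    (∀ ε : ℝ, 0 < ε → ∀ h : Lp ℝ p μ, MemLp (⇑h) ∞ μ →
      (∀ᵐ ω ∂μ, (x ω : EReal) ≤ xa ω + (ε : EReal) → 0 ≤ h ω) →
      (∀ᵐ ω ∂μ, xb ω - (ε : EReal) ≤ (x ω : EReal) → h ω ≤ 0) →
      h ∈ bouligandTangentCone K x) ∧
    (∀ h : Lp ℝ p μ, h ∈ bouligandTangentCone K x →
      (∀ᵐ ω ∂μ, xa ω = (x ω : EReal) → 0 ≤ h ω) ∧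
      (∀ᵐ ω ∂μ, xb ω = (x ω : EReal) → h ω ≤ 0)) :=
  tangent_cone_estimates_of_box_constraints_general μ p xa xb K hK x hx
end
end

section
/- Let (Ω,Σ,μ) be σ-finite, p ∈ [1,∞], K := {x ∈ L^p(μ) : x_a ≤ x ≤ x_b μ-a.e.} nonempty, and x ∈ K. Then the normal cone N_K(x) (taken in L^{p'}(μ), with p' the conjugate exponent) equals {ζ ∈ L^{p'}(μ) : ζ ≤ 0 μ-a.e. on {x_a = x < x_b}, ζ = 0 μ-a.e. on {x_a < x < x_b}, ζ ≥ 0 μ-a.e. on {x_a < x = x_b}}. -/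
open MeasureTheory Filter Topology Pointwise
open scoped ENNReal Classical

noncomputable section

/-- Pairing against an indicator is a set integral. -/
lemma pairing_indicatorConstLp {Ω : Type*} [MeasurableSpace Ω] {μ : Measure Ω} {p q : ℝ≥0∞}
    (ζ : Lp ℝ q μ) {E : Set Ω} (hE : MeasurableSet E) (hμE : μ E ≠ ∞) (c : ℝ) :
    pairing μ ζ (indicatorConstLp p hE hμE c) = ∫ ω in E, ζ ω * c ∂μ := by
  rw [pairing, ← integral_indicator hE]
  refine integral_congr_ae ?_
  filter_upwards [indicatorConstLp_coeFn (p := p) (hs := hE) (hμs := hμE) (c := c)] with ω hω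
  rw [hω]
  by_cases h : ω ∈ E <;>
    simp [Set.indicator_of_mem, Set.indicator_of_notMem, h]

set_option maxHeartbeats 1000000 in
set_option synthInstance.maxHeartbeats 400000 in
theorem normal_cone_of_box_constraints
    {Ω : Type*} [MeasurableSpace Ω] (μ : Measure Ω) [SigmaFinite μ]
    (p q : ℝ≥0∞) [Fact (1 ≤ p)] [Fact (1 ≤ q)] (hp : 1 ≤ p) (hpq : p⁻¹ + q⁻¹ = 1)
    (xa xb : Ω → EReal) (hxa : Measurable xa) (hxb : Measurable xb)
    (K : Set (Lp ℝ p μ))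
    (hK : K = {y : Lp ℝ p μ | ∀ᵐ ω ∂μ, xa ω ≤ (y ω : EReal) ∧ (y ω : EReal) ≤ xb ω})
    (hKne : K.Nonempty) (x : Lp ℝ p μ) (hx : x ∈ K) :
    normalCone μ p q K x =
      {ζ : Lp ℝ q μ |
        (∀ᵐ ω ∂μ, (xa ω = (x ω : EReal) ∧ (x ω : EReal) < xb ω) → ζ ω ≤ 0) ∧
        (∀ᵐ ω ∂μ, (xa ω < (x ω : EReal) ∧ (x ω : EReal) < xb ω) → ζ ω = 0) ∧
        (∀ᵐ ω ∂μ, (xa ω < (x ω : EReal) ∧ (x ω : EReal) = xb ω) → 0 ≤ ζ ω)} := by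
  classical
  have hx' : ∀ᵐ ω ∂μ, xa ω ≤ (x ω : EReal) ∧ (x ω : EReal) ≤ xb ω := by
    rw [hK] at hx; exact hx
  -- measurable representative of x
  set f : Ω → ℝ := (Lp.aestronglyMeasurable x).mk x with hf_def
  have hf_meas : Measurable f :=
    (Lp.aestronglyMeasurable x).stronglyMeasurable_mk.measurable
  have hf_ae : ⇑x =ᵐ[μ] f := (Lp.aestronglyMeasurable x).ae_eq_mk
  -- generic tangent directions: indicator functions with enough room
  have htan : ∀ (c : ℝ) (E : Set Ω) (hE : MeasurableSet E) (hμE : μ E ≠ ∞) (t : ℝ),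
      0 < t →
      (∀ᵐ ω ∂μ, ω ∈ E → ∀ s : ℝ, 0 ≤ s → s ≤ t →
        xa ω ≤ ((x ω + s * c : ℝ) : EReal) ∧ ((x ω + s * c : ℝ) : EReal) ≤ xb ω) →
      (indicatorConstLp p hE hμE c : Lp ℝ p μ) ∈ bouligandTangentCone K x := by
    intro c E hE hμE t ht hsub
    set e : Lp ℝ p μ := indicatorConstLp p hE hμE c with he_def
    have htk : ∀ k : ℕ, 0 < t / ((k : ℝ) + 1) := fun k => div_pos ht (by positivity)
    have h0 : Tendsto (fun k : ℕ => t / ((k : ℝ) + 1)) atTop (𝓝 0) := by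
      have := tendsto_one_div_add_atTop_nhds_zero_nat.const_mul t
      simpa [div_eq_mul_inv] using this
    refine ⟨fun k => x + (t / ((k : ℝ) + 1)) • e, fun k => t / ((k : ℝ) + 1), ?_, htk, ?_, h0, ?_⟩
    · intro k
      rw [hK]
      have h1 := Lp.coeFn_add x ((t / ((k : ℝ) + 1)) • e)
      have h2 := Lp.coeFn_smul (t / ((k : ℝ) + 1)) e
      have h3 := indicatorConstLp_coeFn (p := p) (hs := hE) (hμs := hμE) (c := c)
      filter_upwards [h1, h2, h3, hx', hsub] with ω e1 e2 e3 hxω hsubω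
      have hval : (x + (t / ((k : ℝ) + 1)) • e) ω
          = x ω + (t / ((k : ℝ) + 1)) * (E.indicator (fun _ => c) ω) := by
        rw [e1, Pi.add_apply, e2, Pi.smul_apply, e3, smul_eq_mul]
      by_cases hωE : ω ∈ E
      · rw [hval, Set.indicator_of_mem hωE]
        exact hsubω hωE _ (htk k).le (div_le_self ht.le (by norm_num))
      · rw [hval, Set.indicator_of_notMem hωE, mul_zero, add_zero]
        exact hxω
    · have : Tendsto (fun k : ℕ => x + (t / ((k : ℝ) + 1)) • e) atTop (𝓝 (x + (0 : ℝ) • e)) :=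
        tendsto_const_nhds.add (h0.smul_const e)
      simpa using this
    · have heq : (fun k : ℕ => (t / ((k : ℝ) + 1))⁻¹ • ((x + (t / ((k : ℝ) + 1)) • e) - x))
          = fun _ => e := by
        funext k
        rw [add_sub_cancel_left, smul_smul, inv_mul_cancel₀ (htk k).ne', one_smul]
      rw [heq]
      exact tendsto_const_nhds
  ext ζ
  -- measurable representative of ζ
  set g : Ω → ℝ := (Lp.aestronglyMeasurable ζ).mk ζ with hg_def
  have hg_meas : Measurable g :=
    (Lp.aestronglyMeasurable ζ).stronglyMeasurable_mk.measurable
  have hg_ae : ⇑ζ =ᵐ[μ] g := (Lp.aestronglyMeasurable ζ).ae_eq_mk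
  constructor
  · -- normal cone ⊆ sign conditions
    intro hζ
    -- room above: g ≤ 0 a.e. on {x < xb}
    have claimU : ∀ᵐ ω ∂μ, ((f ω : EReal) < xb ω) → g ω ≤ 0 := by
      set F : ℕ → ℕ → Set Ω := fun n m =>
        {ω | ((f ω + 1 / ((n : ℝ) + 1) : ℝ) : EReal) ≤ xb ω} ∩ spanningSets μ m with hF_def
      have hFmeas : ∀ n m, MeasurableSet (F n m) := fun n m =>
        (measurableSet_le (measurable_coe_real_ereal.comp
          (hf_meas.add_const _)) hxb).inter (measurableSet_spanningSets μ m)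
      have hFfin : ∀ n m, μ (F n m) < ∞ := fun n m =>
        lt_of_le_of_lt (measure_mono Set.inter_subset_right) (measure_spanningSets_lt_top μ m)
      have main : ∀ n m : ℕ, ∀ᵐ ω ∂μ, ω ∈ F n m → g ω ≤ 0 := by
        intro n m
        haveI : Fact (μ (F n m) < ∞) := ⟨hFfin n m⟩
        have hint : Integrable g (μ.restrict (F n m)) :=
          (((Lp.memLp ζ).ae_eq hg_ae).restrict (F n m)).integrable
            (Fact.out : (1 : ℝ≥0∞) ≤ q)
        have hae : 0 ≤ᵐ[μ.restrict (F n m)] fun ω => -g ω := by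
          refine ae_nonneg_of_forall_setIntegral_nonneg hint.neg ?_
          intro s hs _
          rw [Measure.restrict_restrict hs]
          set E : Set Ω := s ∩ F n m with hE_def
          have hEmeas : MeasurableSet E := hs.inter (hFmeas n m)
          have hEfin : μ E ≠ ∞ :=
            (lt_of_le_of_lt (measure_mono Set.inter_subset_right) (hFfin n m)).ne
          have hsub : ∀ᵐ ω ∂μ, ω ∈ E → ∀ s' : ℝ, 0 ≤ s' → s' ≤ 1 / ((n : ℝ) + 1) →
              xa ω ≤ ((x ω + s' * 1 : ℝ) : EReal) ∧ ((x ω + s' * 1 : ℝ) : EReal) ≤ xb ω := by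
            filter_upwards [hx', hf_ae] with ω hxω hfω hmem s' hs0 hs1
            have hup : ((f ω + 1 / ((n : ℝ) + 1) : ℝ) : EReal) ≤ xb ω := hmem.2.1
            constructor
            · exact le_trans hxω.1 (EReal.coe_le_coe_iff.mpr (by nlinarith))
            · refine le_trans (EReal.coe_le_coe_iff.mpr ?_) hup
              rw [hfω] at *
              nlinarith
          have hmem := htan 1 E hEmeas hEfin (1 / ((n : ℝ) + 1)) (by positivity) hsub
          have hle := hζ _ hmem
          rw [pairing_indicatorConstLp ζ hEmeas hEfin 1] at hle
          have hEq : ∫ ω in E, ζ ω * 1 ∂μ = ∫ ω in E, g ω ∂μ := by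
            refine integral_congr_ae ?_
            filter_upwards [ae_restrict_of_ae hg_ae] with ω hω
            rw [mul_one, hω]
          rw [hEq] at hle
          rw [integral_neg]
          linarith
        have hae' : ∀ᵐ ω ∂μ.restrict (F n m), g ω ≤ 0 :=
          hae.mono fun ω h => by simpa using neg_nonneg.mp h
        exact (ae_restrict_iff' (hFmeas n m)).mp hae'
      have hall : ∀ᵐ ω ∂μ, ∀ n m : ℕ, ω ∈ F n m → g ω ≤ 0 :=
        ae_all_iff.mpr fun n => ae_all_iff.mpr (main n)
      filter_upwards [hall] with ω hω hlt
      have hmem : ω ∈ ⋃ m, spanningSets μ m := by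
        rw [iUnion_spanningSets]; trivial
      obtain ⟨m, hm⟩ := Set.mem_iUnion.mp hmem
      by_cases hbt : xb ω = ⊤
      · exact hω 0 m ⟨by rw [Set.mem_setOf_eq, hbt]; exact le_top, hm⟩
      · have hbb : xb ω ≠ ⊥ := by
          intro h; rw [h] at hlt; exact lt_asymm (EReal.bot_lt_coe (f ω)) hlt
        obtain ⟨r, hr⟩ : ∃ r : ℝ, xb ω = (r : EReal) := by
          lift xb ω to ℝ using ⟨hbt, hbb⟩ with r hr
          exact ⟨r, rfl⟩
        rw [hr] at hlt
        have hfr : f ω < r := EReal.coe_lt_coe_iff.mp hlt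
        obtain ⟨n, hn⟩ := exists_nat_one_div_lt (sub_pos.mpr hfr)
        refine hω n m ⟨?_, hm⟩
        rw [Set.mem_setOf_eq, hr]
        exact EReal.coe_le_coe_iff.mpr (by linarith)
    -- room below: 0 ≤ g a.e. on {xa < x}
    have claimL : ∀ᵐ ω ∂μ, (xa ω < (f ω : EReal)) → 0 ≤ g ω := by
      set F : ℕ → ℕ → Set Ω := fun n m =>
        {ω | xa ω ≤ ((f ω - 1 / ((n : ℝ) + 1) : ℝ) : EReal)} ∩ spanningSets μ m with hF_def
      have hFmeas : ∀ n m, MeasurableSet (F n m) := fun n m =>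
        (measurableSet_le hxa (measurable_coe_real_ereal.comp
          (hf_meas.add_const _))).inter (measurableSet_spanningSets μ m)
      have hFfin : ∀ n m, μ (F n m) < ∞ := fun n m =>
        lt_of_le_of_lt (measure_mono Set.inter_subset_right) (measure_spanningSets_lt_top μ m)
      have main : ∀ n m : ℕ, ∀ᵐ ω ∂μ, ω ∈ F n m → 0 ≤ g ω := by
        intro n m
        haveI : Fact (μ (F n m) < ∞) := ⟨hFfin n m⟩
        have hint : Integrable g (μ.restrict (F n m)) :=
          (((Lp.memLp ζ).ae_eq hg_ae).restrict (F n m)).integrable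
            (Fact.out : (1 : ℝ≥0∞) ≤ q)
        have hae : 0 ≤ᵐ[μ.restrict (F n m)] g := by
          refine ae_nonneg_of_forall_setIntegral_nonneg hint ?_
          intro s hs _
          rw [Measure.restrict_restrict hs]
          set E : Set Ω := s ∩ F n m with hE_def
          have hEmeas : MeasurableSet E := hs.inter (hFmeas n m)
          have hEfin : μ E ≠ ∞ :=
            (lt_of_le_of_lt (measure_mono Set.inter_subset_right) (hFfin n m)).ne
          have hsub : ∀ᵐ ω ∂μ, ω ∈ E → ∀ s' : ℝ, 0 ≤ s' → s' ≤ 1 / ((n : ℝ) + 1) →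
              xa ω ≤ ((x ω + s' * (-1) : ℝ) : EReal) ∧
                ((x ω + s' * (-1) : ℝ) : EReal) ≤ xb ω := by
            filter_upwards [hx', hf_ae] with ω hxω hfω hmem s' hs0 hs1
            have hlow : xa ω ≤ ((f ω - 1 / ((n : ℝ) + 1) : ℝ) : EReal) := hmem.2.1
            constructor
            · refine le_trans hlow (EReal.coe_le_coe_iff.mpr ?_)
              rw [hfω] at *
              nlinarith
            · exact le_trans (EReal.coe_le_coe_iff.mpr (by nlinarith)) hxω.2
          have hmem := htan (-1) E hEmeas hEfin (1 / ((n : ℝ) + 1)) (by positivity) hsub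
          have hle := hζ _ hmem
          rw [pairing_indicatorConstLp ζ hEmeas hEfin (-1)] at hle
          have hEq : ∫ ω in E, ζ ω * (-1) ∂μ = -∫ ω in E, g ω ∂μ := by
            rw [← integral_neg]
            refine integral_congr_ae ?_
            filter_upwards [ae_restrict_of_ae hg_ae] with ω hω
            rw [hω]; ring
          rw [hEq] at hle
          linarith
        exact (ae_restrict_iff' (hFmeas n m)).mp hae
      have hall : ∀ᵐ ω ∂μ, ∀ n m : ℕ, ω ∈ F n m → 0 ≤ g ω :=
        ae_all_iff.mpr fun n => ae_all_iff.mpr (main n)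
      filter_upwards [hall] with ω hω hlt
      have hmem : ω ∈ ⋃ m, spanningSets μ m := by
        rw [iUnion_spanningSets]; trivial
      obtain ⟨m, hm⟩ := Set.mem_iUnion.mp hmem
      by_cases hbt : xa ω = ⊥
      · exact hω 0 m ⟨by rw [Set.mem_setOf_eq, hbt]; exact bot_le, hm⟩
      · have hbb : xa ω ≠ ⊤ := by
          intro h; rw [h] at hlt; exact lt_asymm (EReal.coe_lt_top (f ω)) hlt
        obtain ⟨r, hr⟩ : ∃ r : ℝ, xa ω = (r : EReal) := by
          lift xa ω to ℝ using ⟨hbb, hbt⟩ with r hr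
          exact ⟨r, rfl⟩
        rw [hr] at hlt
        have hfr : r < f ω := EReal.coe_lt_coe_iff.mp hlt
        obtain ⟨n, hn⟩ := exists_nat_one_div_lt (sub_pos.mpr hfr)
        refine hω n m ⟨?_, hm⟩
        rw [Set.mem_setOf_eq, hr]
        exact EReal.coe_le_coe_iff.mpr (by linarith)
    refine ⟨?_, ?_, ?_⟩
    · filter_upwards [claimU, hf_ae, hg_ae] with ω hU hf hg h
      rw [hg]
      exact hU (by rw [← hf]; exact h.2)
    · filter_upwards [claimU, claimL, hf_ae, hg_ae] with ω hU hL hf hg h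
      rw [hg]
      exact le_antisymm (hU (by rw [← hf]; exact h.2)) (hL (by rw [← hf]; exact h.1))
    · filter_upwards [claimL, hf_ae, hg_ae] with ω hL hf hg h
      rw [hg]
      exact hL (by rw [← hf]; exact h.1)
  · -- sign conditions ⊆ normal cone
    rintro ⟨h1, h2, h3⟩ d hd
    obtain ⟨xs, ts, hxsK, hts, _, _, hquot⟩ := hd
    have hKs : ∀ᵐ ω ∂μ, ∀ k, xa ω ≤ (xs k ω : EReal) ∧ (xs k ω : EReal) ≤ xb ω :=
      ae_all_iff.mpr fun k => by have := hxsK k; rw [hK] at this; exact this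
    have hcoe : ∀ᵐ ω ∂μ, ∀ k,
        ((fun j => (ts j)⁻¹ • (xs j - x)) k : Lp ℝ p μ) ω = (ts k)⁻¹ * (xs k ω - x ω) := by
      refine ae_all_iff.mpr fun k => ?_
      filter_upwards [Lp.coeFn_smul (ts k)⁻¹ (xs k - x), Lp.coeFn_sub (xs k) x] with ω e1 e2
      rw [e1, Pi.smul_apply, e2, Pi.sub_apply, smul_eq_mul]
    have hmeas := tendstoInMeasure_of_tendsto_Lp (μ := μ) hquot
    obtain ⟨ns, _, haetend⟩ := hmeas.exists_seq_tendsto_ae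
    rw [pairing]
    refine integral_nonpos_of_ae ?_
    filter_upwards [h1, h2, h3, hx', hKs, hcoe, haetend] with ω hω1 hω2 hω3 hxω hKω hcω htω
    have htω' : Tendsto (fun i => (ts (ns i))⁻¹ * (xs (ns i) ω - x ω)) atTop (𝓝 (d ω)) := by
      refine htω.congr fun i => ?_
      exact hcω (ns i)
    rcases eq_or_lt_of_le hxω.1 with hEq | hLt
    · have hdnn : 0 ≤ d ω := by
        refine ge_of_tendsto' htω' fun i => ?_
        have hx_le : x ω ≤ xs (ns i) ω := by
          have := (hKω (ns i)).1
          rw [hEq] at this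
          exact EReal.coe_le_coe_iff.mp this
        exact mul_nonneg (inv_nonneg.mpr (hts (ns i)).le) (sub_nonneg.mpr hx_le)
      rcases eq_or_lt_of_le hxω.2 with hEq2 | hLt2
      · have hdnp : d ω ≤ 0 := by
          refine le_of_tendsto' htω' fun i => ?_
          have hx_ge : xs (ns i) ω ≤ x ω := by
            have := (hKω (ns i)).2
            rw [← hEq2] at this
            exact EReal.coe_le_coe_iff.mp this
          exact mul_nonpos_iff.mpr (Or.inl ⟨inv_nonneg.mpr (hts (ns i)).le,
            sub_nonpos.mpr hx_ge⟩)
        have : d ω = 0 := le_antisymm hdnp hdnn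
        simp [this]
      · exact mul_nonpos_iff.mpr (Or.inr ⟨hω1 ⟨hEq, hLt2⟩, hdnn⟩)
    · rcases eq_or_lt_of_le hxω.2 with hEq2 | hLt2
      · have hdnp : d ω ≤ 0 := by
          refine le_of_tendsto' htω' fun i => ?_
          have hx_ge : xs (ns i) ω ≤ x ω := by
            have := (hKω (ns i)).2
            rw [← hEq2] at this
            exact EReal.coe_le_coe_iff.mp this
          exact mul_nonpos_iff.mpr (Or.inl ⟨inv_nonneg.mpr (hts (ns i)).le,
            sub_nonpos.mpr hx_ge⟩)
        exact mul_nonpos_iff.mpr (Or.inl ⟨hω3 ⟨hLt, hEq2⟩, hdnp⟩)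
      · simp [hω2 ⟨hLt, hLt2⟩]
end
end

section
/- Let h : Ω → R be measurable with h ≥ 0 μ-a.e. on {x_a = x} and h ≤ 0 μ-a.e. on {x_b = x}, where x ∈ K := {x ∈ L^p(μ) : x_a ≤ x ≤ x_b μ-a.e.}, h ∈ L^p(μ), p ∈ [1,∞). Define h_k by h_k(ω) = 0 if x(ω) ∈ (x_a(ω), x_a(ω)+1/k) ∪ (x_b(ω)−1/k, x_b(ω)) or |h(ω)| > k, and h_k(ω) = h(ω) otherwise. Then x + h_k/k² ∈ K for all k and h_k → h in L^p(μ). -/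
/-!
Where `h_k ≠ 0` we have `|h_k| ≤ k`, so the step `h_k / k²` has size at most `1 / k`. It cannot
cross a bound lying at least `1 / k` away from `x`, and at a bound that `x` touches the sign
conditions make it point into the box. For fixed `ω` none of the cut-off conditions holds once
`k` is large, so `h_k → h` pointwise with `|h_k - h| ≤ |h|`, and dominated convergence gives
`h_k → h` in `L^p`.
-/

open MeasureTheory Filter Topology Pointwise
open scoped ENNReal Classical

noncomputable section

open Set

theorem Filter.Tendsto.eventually_notMem_Ioo_lower {α ι : Type*} [LinearOrder α]
    [TopologicalSpace α] [OrderTopology α] {l : Filter ι} {u : ι → α} {v : α}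
    (hu : Tendsto u l (𝓝 v)) (a : α) : ∀ᶠ n in l, a ∉ Ioo (u n) v := by
  by_cases hav : a < v
  · filter_upwards [hu.eventually (lt_mem_nhds hav)] with n hn hmem using
      (hmem.1.trans hn).false
  · exact Eventually.of_forall fun n hmem => hav hmem.2

theorem Filter.Tendsto.eventually_notMem_Ioo_upper {α ι : Type*} [LinearOrder α]
    [TopologicalSpace α] [OrderTopology α] {l : Filter ι} {u : ι → α} {v : α}
    (hu : Tendsto u l (𝓝 v)) (b : α) : ∀ᶠ n in l, b ∉ Ioo v (u n) := by
  by_cases hvb : v < b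
  · filter_upwards [hu.eventually (gt_mem_nhds hvb)] with n hn hmem using
      (hmem.2.trans hn).false
  · exact Eventually.of_forall fun n hmem => hvb hmem.1

namespace EReal

theorem coe_lt_add_coe_iff {a : EReal} {x c : ℝ} :
    (x : EReal) < a + c ↔ ((x - c : ℝ) : EReal) < a := by
  rw [coe_sub, sub_lt_iff (.inl (coe_ne_bot c)) (.inl (coe_ne_top c))]

theorem sub_coe_lt_coe_iff {b : EReal} {x c : ℝ} :
    b - c < x ↔ b < ((x + c : ℝ) : EReal) := by
  rw [coe_add, sub_lt_iff (.inl (coe_ne_bot c)) (.inl (coe_ne_top c))]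

theorem le_coe_add_of_notMem_Ioo {a : EReal} {x d ε : ℝ} (hax : a ≤ x)
    (hgap : a ∉ Ioo ((x - ε : ℝ) : EReal) x) (hsign : a = x → 0 ≤ d) (hd : -ε ≤ d) :
    a ≤ ((x + d : ℝ) : EReal) := by
  rcases hax.eq_or_lt with rfl | hlt
  · exact EReal.coe_le_coe_iff.2 (by linarith [hsign rfl])
  · have : a ≤ ((x - ε : ℝ) : EReal) := not_lt.1 fun h => hgap ⟨h, hlt⟩
    exact this.trans (EReal.coe_le_coe_iff.2 (by linarith))

theorem coe_add_le_of_notMem_Ioo {b : EReal} {x d ε : ℝ} (hxb : (x : EReal) ≤ b)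
    (hgap : b ∉ Ioo (x : EReal) ((x + ε : ℝ) : EReal)) (hsign : b = x → d ≤ 0) (hd : d ≤ ε) :
    ((x + d : ℝ) : EReal) ≤ b := by
  rcases hxb.eq_or_lt with rfl | hlt
  · exact EReal.coe_le_coe_iff.2 (by linarith [hsign rfl])
  · have : ((x + ε : ℝ) : EReal) ≤ b := not_lt.1 fun h => hgap ⟨hlt, h⟩
    exact (EReal.coe_le_coe_iff.2 (by linarith)).trans this

end EReal

theorem MeasureTheory.tendsto_eLpNorm_zero_of_dominated {α E F : Type*} [MeasurableSpace α]
    {μ : Measure α} [NormedAddCommGroup E] [NormedAddCommGroup F] {p : ℝ≥0∞} (hp : p ≠ ∞)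
    {f : ℕ → α → E} {g : α → F} (hf : ∀ n, AEStronglyMeasurable (f n) μ) (hg : MemLp g p μ)
    (hbound : ∀ n, ∀ᵐ a ∂μ, ‖f n a‖ ≤ ‖g a‖)
    (hlim : ∀ᵐ a ∂μ, Tendsto (fun n => f n a) atTop (𝓝 0)) :
    Tendsto (fun n => eLpNorm (f n) p μ) atTop (𝓝 0) := by
  rcases eq_or_ne p 0 with rfl | hp0
  · simp
  have hpos : 0 < p.toReal := ENNReal.toReal_pos hp0 hp
  have hint : Tendsto (fun n => ∫⁻ a, ‖f n a‖ₑ ^ p.toReal ∂μ) atTop (𝓝 0) := by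
    simpa using tendsto_lintegral_of_dominated_convergence' (f := fun _ => 0)
      (fun a => ‖g a‖ₑ ^ p.toReal) (fun n => (hf n).enorm.pow_const _)
      (fun n => (hbound n).mono fun a ha =>
        ENNReal.rpow_le_rpow (enorm_le_iff_norm_le.2 ha) hpos.le)
      (lintegral_rpow_enorm_lt_top_of_eLpNorm_lt_top hp0 hp hg.eLpNorm_lt_top).ne
      (hlim.mono fun a ha => by
        simpa [Function.comp_def, ENNReal.zero_rpow_of_pos hpos] using
          (ENNReal.continuous_rpow_const (y := p.toReal) |>.tendsto _).comp
            ((continuous_enorm.tendsto 0).comp ha))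
  have hroot := (ENNReal.continuous_rpow_const (y := 1 / p.toReal)).tendsto 0 |>.comp hint
  rw [ENNReal.zero_rpow_of_pos (by positivity)] at hroot
  simpa only [eLpNorm_eq_lintegral_rpow_enorm_toReal hp0 hp, Function.comp_def] using hroot

section BoxTruncation

variable {Ω : Type*} {xa xb : Ω → EReal} {x h : Ω → ℝ}

variable (xa xb x h) in
/-- The condition `xa ω ∈ Ioo (x ω - ε) (x ω)` is `x ω ∈ (xa ω, xa ω + ε)` rewritten without
arithmetic in `EReal`; likewise for `xb`. -/
def boxTruncation (ε M : ℝ) (ω : Ω) : ℝ :=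
  if (xa ω ∈ Ioo ((x ω - ε : ℝ) : EReal) (x ω) ∨
      xb ω ∈ Ioo (x ω : EReal) ((x ω + ε : ℝ) : EReal)) ∨ M < |h ω|
  then 0 else h ω

theorem boxTruncation_eq_zero_or_eq (ε M : ℝ) (ω : Ω) :
    boxTruncation xa xb x h ε M ω = 0 ∨ boxTruncation xa xb x h ε M ω = h ω := by
  unfold boxTruncation
  split_ifs <;> simp

theorem abs_boxTruncation_le (ε M : ℝ) (ω : Ω) : |boxTruncation xa xb x h ε M ω| ≤ |h ω| := by
  rcases boxTruncation_eq_zero_or_eq ε M ω with h0 | hh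
  · rw [h0, abs_zero]
    exact abs_nonneg _
  · rw [hh]

theorem abs_boxTruncation_sub_le (ε M : ℝ) (ω : Ω) :
    |boxTruncation xa xb x h ε M ω - h ω| ≤ |h ω| := by
  rcases boxTruncation_eq_zero_or_eq ε M ω with h0 | hh
  · rw [h0, zero_sub, abs_neg]
  · rw [hh, sub_self, abs_zero]
    exact abs_nonneg _

theorem boxTruncation_mem_box {ε M t : ℝ} (ht : 0 < t) (hMε : M ≤ ε * t) {ω : Ω}
    (hbox : xa ω ≤ x ω ∧ (x ω : EReal) ≤ xb ω) (hsa : xa ω = x ω → 0 ≤ h ω)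
    (hsb : xb ω = x ω → h ω ≤ 0) :
    xa ω ≤ ((x ω + boxTruncation xa xb x h ε M ω / t : ℝ) : EReal) ∧
      ((x ω + boxTruncation xa xb x h ε M ω / t : ℝ) : EReal) ≤ xb ω := by
  unfold boxTruncation
  split_ifs with hcut
  · simpa using hbox
  simp only [not_or, not_lt] at hcut
  obtain ⟨⟨hgap_a, hgap_b⟩, hM⟩ := hcut
  have hstep : |h ω / t| ≤ ε := by
    rw [abs_div, abs_of_pos ht, div_le_iff₀ ht]
    linarith
  obtain ⟨hstep_lo, hstep_hi⟩ := abs_le.1 hstep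
  exact ⟨EReal.le_coe_add_of_notMem_Ioo hbox.1 hgap_a (fun he => div_nonneg (hsa he) ht.le)
      hstep_lo,
    EReal.coe_add_le_of_notMem_Ioo hbox.2 hgap_b
      (fun he => div_nonpos_of_nonpos_of_nonneg (hsb he) ht.le) hstep_hi⟩

theorem eventually_boxTruncation_eq {ε M : ℕ → ℝ} (hε : Tendsto ε atTop (𝓝 0))
    (hM : Tendsto M atTop atTop) (ω : Ω) :
    ∀ᶠ n in atTop, boxTruncation xa xb x h (ε n) (M n) ω = h ω := by
  have hlower : Tendsto (fun n => ((x ω - ε n : ℝ) : EReal)) atTop (𝓝 (x ω)) :=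
    (continuous_coe_real_ereal.tendsto _).comp (by simpa using tendsto_const_nhds.sub hε)
  have hupper : Tendsto (fun n => ((x ω + ε n : ℝ) : EReal)) atTop (𝓝 (x ω)) :=
    (continuous_coe_real_ereal.tendsto _).comp (by simpa using tendsto_const_nhds.add hε)
  filter_upwards [hlower.eventually_notMem_Ioo_lower (xa ω),
    hupper.eventually_notMem_Ioo_upper (xb ω), hM.eventually_ge_atTop |h ω|] with n ha hb hbig
  exact if_neg (not_or.2 ⟨not_or.2 ⟨ha, hb⟩, not_lt.2 hbig⟩)

variable [MeasurableSpace Ω]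

theorem measurable_boxTruncation (hxa : Measurable xa) (hxb : Measurable xb) (hx : Measurable x)
    (hh : Measurable h) (ε M : ℝ) : Measurable (boxTruncation xa xb x h ε M) := by
  have hx' : Measurable fun ω => (x ω : EReal) := measurable_coe_real_ereal.comp hx
  have hx_sub : Measurable fun ω => ((x ω - ε : ℝ) : EReal) :=
    measurable_coe_real_ereal.comp (hx.sub_const ε)
  have hx_add : Measurable fun ω => ((x ω + ε : ℝ) : EReal) :=
    measurable_coe_real_ereal.comp (hx.add_const ε)
  refine Measurable.ite ?_ measurable_const hh
  exact (((measurableSet_lt hx_sub hxa).inter (measurableSet_lt hxa hx')).union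
    ((measurableSet_lt hx' hxb).inter (measurableSet_lt hxb hx_add))).union
    (measurableSet_lt measurable_const hh.abs)

theorem tendsto_eLpNorm_boxTruncation_sub {μ : Measure Ω} {p : ℝ≥0∞} (hp : p ≠ ∞)
    (hxa : Measurable xa) (hxb : Measurable xb) (hx : Measurable x) (hh : Measurable h)
    (hmem : MemLp h p μ) {ε M : ℕ → ℝ} (hε : Tendsto ε atTop (𝓝 0))
    (hM : Tendsto M atTop atTop) :
    Tendsto (fun n => eLpNorm (fun ω => boxTruncation xa xb x h (ε n) (M n) ω - h ω) p μ)
      atTop (𝓝 0) :=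
  tendsto_eLpNorm_zero_of_dominated hp
    (fun _ => ((measurable_boxTruncation hxa hxb hx hh _ _).sub hh).aestronglyMeasurable) hmem
    (fun _ => ae_of_all _ fun ω => abs_boxTruncation_sub_le _ _ ω)
    (ae_of_all _ fun ω => tendsto_nhds_of_eventually_eq
      ((eventually_boxTruncation_eq hε hM ω).mono fun _ hn => sub_eq_zero.2 hn))

end BoxTruncation

theorem approximating_sequence_for_tangent_cone_general
    {Ω : Type*} [MeasurableSpace Ω] (μ : Measure Ω)
    (p : ℝ≥0∞) (hp' : p ≠ ∞)
    (xa xb : Ω → EReal) (hxa : Measurable xa) (hxb : Measurable xb)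
    (x : Lp ℝ p μ)
    (hxK : ∀ᵐ ω ∂μ, xa ω ≤ (x ω : EReal) ∧ (x ω : EReal) ≤ xb ω)
    (h : Ω → ℝ) (hmeas : Measurable h) (hmem : MemLp h p μ)
    (hsign_a : ∀ᵐ ω ∂μ, xa ω = (x ω : EReal) → 0 ≤ h ω)
    (hsign_b : ∀ᵐ ω ∂μ, xb ω = (x ω : EReal) → h ω ≤ 0)
    (hk : ℕ → Ω → ℝ)
    (hkdef : ∀ (k : ℕ) (ω : Ω), hk k ω =
      if ((xa ω < (x ω : EReal) ∧ (x ω : EReal) < xa ω + ((1 / (k : ℝ)) : EReal)) ∨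
          (xb ω - ((1 / (k : ℝ)) : EReal) < (x ω : EReal) ∧ (x ω : EReal) < xb ω)) ∨
         (k : ℝ) < |h ω|
      then 0 else h ω) :
    (∀ k : ℕ, 1 ≤ k →
      MemLp (fun ω => x ω + hk k ω / (k : ℝ) ^ 2) p μ ∧
      (∀ᵐ ω ∂μ, xa ω ≤ ((x ω + hk k ω / (k : ℝ) ^ 2 : ℝ) : EReal) ∧
        ((x ω + hk k ω / (k : ℝ) ^ 2 : ℝ) : EReal) ≤ xb ω)) ∧
    Tendsto (fun k : ℕ => eLpNorm (fun ω => hk k ω - h ω) p μ) atTop (𝓝 0) := by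
  have hk_eq : hk = fun k : ℕ => boxTruncation xa xb x h (1 / k) k := by
    ext k ω
    simp only [hkdef, boxTruncation, ← EReal.coe_one, ← EReal.coe_div, EReal.coe_lt_add_coe_iff,
      EReal.sub_coe_lt_coe_iff, mem_Ioo, and_comm]
  subst hk_eq
  have hx : Measurable x := (Lp.stronglyMeasurable x).measurable
  refine ⟨fun k hk1 => ⟨?_, ?_⟩, tendsto_eLpNorm_boxTruncation_sub hp' hxa hxb hx hmeas hmem
    tendsto_one_div_atTop_nhds_zero_nat tendsto_natCast_atTop_atTop⟩
  · have hcut : MemLp (boxTruncation xa xb x h (1 / k) k) p μ :=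
      hmem.of_le (measurable_boxTruncation hxa hxb hx hmeas _ _).aestronglyMeasurable
        (ae_of_all _ fun ω => abs_boxTruncation_le _ _ ω)
    exact (Lp.memLp x).add (by simpa only [div_eq_mul_inv] using hcut.mul_const ((k : ℝ) ^ 2)⁻¹)
  · have hkpos : (0 : ℝ) < k := by exact_mod_cast hk1
    have hscale : (k : ℝ) ≤ 1 / k * k ^ 2 := by rw [one_div, sq, inv_mul_cancel_left₀ hkpos.ne']
    filter_upwards [hxK, hsign_a, hsign_b] with ω hbox hsa hsb
    exact boxTruncation_mem_box (by positivity) hscale hbox hsa hsb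

theorem approximating_sequence_for_tangent_cone
    {Ω : Type*} [MeasurableSpace Ω] (μ : Measure Ω) [SigmaFinite μ]
    (p : ℝ≥0∞) [Fact (1 ≤ p)] (hp : 1 ≤ p) (hp' : p ≠ ∞)
    (xa xb : Ω → EReal) (hxa : Measurable xa) (hxb : Measurable xb)
    (x : Lp ℝ p μ)
    (hxK : ∀ᵐ ω ∂μ, xa ω ≤ (x ω : EReal) ∧ (x ω : EReal) ≤ xb ω)
    (h : Ω → ℝ) (hmeas : Measurable h) (hmem : MemLp h p μ)
    (hsign_a : ∀ᵐ ω ∂μ, xa ω = (x ω : EReal) → 0 ≤ h ω)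
    (hsign_b : ∀ᵐ ω ∂μ, xb ω = (x ω : EReal) → h ω ≤ 0)
    (hk : ℕ → Ω → ℝ)
    (hkdef : ∀ (k : ℕ) (ω : Ω), hk k ω =
      if ((xa ω < (x ω : EReal) ∧ (x ω : EReal) < xa ω + ((1 / (k : ℝ)) : EReal)) ∨
          (xb ω - ((1 / (k : ℝ)) : EReal) < (x ω : EReal) ∧ (x ω : EReal) < xb ω)) ∨
         (k : ℝ) < |h ω|
      then 0 else h ω) :
    (∀ k : ℕ, 1 ≤ k →
      MemLp (fun ω => x ω + hk k ω / (k : ℝ) ^ 2) p μ ∧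
      (∀ᵐ ω ∂μ, xa ω ≤ ((x ω + hk k ω / (k : ℝ) ^ 2 : ℝ) : EReal) ∧
        ((x ω + hk k ω / (k : ℝ) ^ 2 : ℝ) : EReal) ≤ xb ω)) ∧
    Tendsto (fun k : ℕ => eLpNorm (fun ω => hk k ω - h ω) p μ) atTop (𝓝 0) :=
  approximating_sequence_for_tangent_cone_general μ p hp' xa xb hxa hxb x hxK h hmeas hmem hsign_a
    hsign_b hk hkdef
end
end

section
/- Let K := {x ∈ L^p(μ) : x_a ≤ x ≤ x_b μ-a.e.} and P := {x ∈ L^p(μ) : ⟨g_i,x⟩ ≤ a_i ∀i, ⟨h_j,x⟩ = b_j ∀j} with p ∈ (1,∞]. Suppose there exists a Slater point x̂ ∈ L^p(μ), i.e. x_a < x̂ < x_b μ-a.e., ⟨g_i, x̂⟩ ≤ a_i for all i, and ⟨h_j, x̂⟩ = b_j for all j. Then for every x ∈ K ∩ P, the set N_K(x) + N_P(x) is norm-closed in L^{p'}(μ). -/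
open MeasureTheory Filter Topology Pointwise
open scoped ENNReal Classical

noncomputable section
set_option maxHeartbeats 1000000
set_option synthInstance.maxHeartbeats 400000

section Helpers
variable {Ω : Type*} [MeasurableSpace Ω] {μ : Measure Ω} {p q : ℝ≥0∞}

lemma integrable_mul_Lp (hpq : p⁻¹ + q⁻¹ = 1) (y : Lp ℝ q μ) (x : Lp ℝ p μ) :
    Integrable (fun ω => y ω * x ω) μ := by
  have h : MemLp (⇑y • ⇑x) 1 μ := by
    refine (Lp.memLp x).smul (Lp.memLp y) (hpqr := ⟨?_⟩)
    rw [inv_one, ← hpq, add_comm]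
  exact memLp_one_iff_integrable.mp h

lemma pairing_sub_right (hpq : p⁻¹ + q⁻¹ = 1) (y : Lp ℝ q μ) (u v : Lp ℝ p μ) :
    pairing μ y (u - v) = pairing μ y u - pairing μ y v := by
  unfold pairing
  rw [← integral_sub (integrable_mul_Lp hpq y u) (integrable_mul_Lp hpq y v)]
  apply integral_congr_ae
  filter_upwards [Lp.coeFn_sub u v] with ω hω
  rw [hω, Pi.sub_apply, mul_sub]

lemma pairing_zero_left (x : Lp ℝ p μ) : pairing μ (0 : Lp ℝ q μ) x = 0 := by
  unfold pairing
  rw [← integral_zero Ω ℝ]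
  apply integral_congr_ae
  filter_upwards [Lp.coeFn_zero ℝ q μ] with ω hω
  rw [hω, Pi.zero_apply, zero_mul]

lemma pairing_add_left (hpq : p⁻¹ + q⁻¹ = 1) (y z : Lp ℝ q μ) (x : Lp ℝ p μ) :
    pairing μ (y + z) x = pairing μ y x + pairing μ z x := by
  unfold pairing
  rw [← integral_add (integrable_mul_Lp hpq y x) (integrable_mul_Lp hpq z x)]
  apply integral_congr_ae
  filter_upwards [Lp.coeFn_add y z] with ω hω
  rw [hω, Pi.add_apply, add_mul]

lemma pairing_smul_left (c : ℝ) (y : Lp ℝ q μ) (x : Lp ℝ p μ) :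
    pairing μ (c • y) x = c * pairing μ y x := by
  unfold pairing
  rw [← integral_const_mul]
  apply integral_congr_ae
  filter_upwards [Lp.coeFn_smul c y] with ω hω
  simp [hω, mul_assoc]

lemma pairing_neg_left (y : Lp ℝ q μ) (x : Lp ℝ p μ) :
    pairing μ (-y) x = -pairing μ y x := by
  have := pairing_smul_left (-1 : ℝ) y x
  simpa using this

lemma pairing_sum_left (hpq : p⁻¹ + q⁻¹ = 1) {ι : Type*} (s : Finset ι)
    (f : ι → Lp ℝ q μ) (x : Lp ℝ p μ) :
    pairing μ (∑ i ∈ s, f i) x = ∑ i ∈ s, pairing μ (f i) x := by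
  classical
  induction s using Finset.induction_on with
  | empty => simpa using pairing_zero_left (q := q) x
  | insert _ _ hns ih =>
      rw [Finset.sum_insert hns, Finset.sum_insert hns, pairing_add_left hpq, ih]

lemma isClosed_ae_nonpos [Fact (1 ≤ q)] (S : Set Ω) :
    IsClosed {ζ : Lp ℝ q μ | ∀ᵐ ω ∂μ, ω ∈ S → ζ ω ≤ 0} := by
  apply IsSeqClosed.isClosed
  intro f ζ hmem hlim
  obtain ⟨ns, _, hae⟩ := (tendstoInMeasure_of_tendsto_Lp hlim).exists_seq_tendsto_ae
  have hall : ∀ᵐ ω ∂μ, ∀ k : ℕ, ω ∈ S → f (ns k) ω ≤ 0 :=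
    (ae_all_iff).2 fun k => hmem (ns k)
  filter_upwards [hae, hall] with ω h1 h2 hS
  exact le_of_tendsto h1 (Eventually.of_forall fun k => h2 k hS)

lemma isClosed_ae_nonneg [Fact (1 ≤ q)] (S : Set Ω) :
    IsClosed {ζ : Lp ℝ q μ | ∀ᵐ ω ∂μ, ω ∈ S → 0 ≤ ζ ω} := by
  apply IsSeqClosed.isClosed
  intro f ζ hmem hlim
  obtain ⟨ns, _, hae⟩ := (tendstoInMeasure_of_tendsto_Lp hlim).exists_seq_tendsto_ae
  have hall : ∀ᵐ ω ∂μ, ∀ k : ℕ, ω ∈ S → 0 ≤ f (ns k) ω :=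
    (ae_all_iff).2 fun k => hmem (ns k)
  filter_upwards [hae, hall] with ω h1 h2 hS
  exact ge_of_tendsto h1 (Eventually.of_forall fun k => h2 k hS)

end Helpers

lemma caratheodory_cone {E ι : Type*} [AddCommGroup E] [Module ℝ E] [Fintype ι] (v : ι → E) :
    ∀ (N : ℕ) (c : ι → ℝ), (∀ i, 0 ≤ c i) →
      (Finset.univ.filter fun i => c i ≠ 0).card ≤ N →
    ∃ c' : ι → ℝ, (∀ i, 0 ≤ c' i) ∧ (∀ i, c i = 0 → c' i = 0) ∧
      ∑ i, c' i • v i = ∑ i, c i • v i ∧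
      LinearIndependent ℝ (fun i : {i : ι // c' i ≠ 0} => v (i : ι)) := by
  intro N
  induction N with
  | zero =>
      intro c hc hcard
      have hempty : ∀ i, c i = 0 := by
        intro i; by_contra hne
        have hi : i ∈ Finset.univ.filter (fun i => c i ≠ 0) := by simp [hne]
        have := Finset.card_pos.mpr ⟨i, hi⟩; omega
      have : IsEmpty {i : ι // c i ≠ 0} := ⟨fun j => j.2 (hempty j.1)⟩
      exact ⟨c, hc, fun i h => h, rfl, linearIndependent_empty_type⟩
  | succ N ih =>
      intro c hc hcard
      by_cases hli : LinearIndependent ℝ (fun i : {i : ι // c i ≠ 0} => v (i : ι))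
      · exact ⟨c, hc, fun i h => h, rfl, hli⟩
      obtain ⟨d0, hd0sum, j0, hj0⟩ := Fintype.not_linearIndependent_iff.mp hli
      have hDgen : ∃ D : ι → ℝ, (∀ i, c i = 0 → D i = 0) ∧ (∑ i, D i • v i = 0) ∧
          ∃ i, 0 < D i := by
        set D0 : ι → ℝ := fun i => if h : c i ≠ 0 then d0 ⟨i, h⟩ else 0 with hD0
        have hsupp : ∀ i, c i = 0 → D0 i = 0 := by
          intro i hi; simp [hD0, hi]
        have hsum : ∑ i, D0 i • v i = 0 := by
          rw [← Finset.sum_filter_of_ne (p := fun i => c i ≠ 0) (by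
            intro i _ hne hci
            apply hne; simp [hD0, hci]),
            Finset.sum_subtype (Finset.univ.filter fun i => c i ≠ 0)
              (p := fun i => c i ≠ 0) (by intro i; simp)]
          rw [← hd0sum]
          apply Finset.sum_congr rfl
          intro i _
          simp [hD0, i.2]
        have hne : D0 (j0 : ι) ≠ 0 := by simpa [hD0, j0.2] using hj0
        rcases lt_or_gt_of_ne hne with hneg | hpos
        · refine ⟨-D0, fun i hi => by simp [hsupp i hi], by
            simpa [neg_smul] using congrArg Neg.neg hsum, ⟨j0, by simpa using hneg⟩⟩
        · exact ⟨D0, hsupp, hsum, ⟨j0, hpos⟩⟩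
      obtain ⟨D, hDsupp, hDsum, i1, hi1⟩ := hDgen
      set F := Finset.univ.filter fun i => 0 < D i with hF
      have hFne : F.Nonempty := ⟨i1, by simp [hF, hi1]⟩
      obtain ⟨i₀, hi₀F, hmin⟩ := F.exists_min_image (fun i => c i / D i) hFne
      have hDi₀ : 0 < D i₀ := by simpa [hF] using hi₀F
      set t := c i₀ / D i₀ with htdef
      have ht : 0 ≤ t := div_nonneg (hc i₀) hDi₀.le
      set c' : ι → ℝ := fun i => c i - t * D i with hc'
      have hc'nonneg : ∀ i, 0 ≤ c' i := by
        intro i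
        by_cases hDi : 0 < D i
        · have hmin' := hmin i (by simp [hF, hDi])
          have h2 : t * D i ≤ c i := by
            rw [← le_div_iff₀ hDi] at *; exact hmin'
          simp [hc']; linarith
        · push_neg at hDi
          have h1 : t * D i ≤ 0 := mul_nonpos_of_nonneg_of_nonpos ht hDi
          have h2 := hc i
          simp [hc']; linarith
      have hc'supp : ∀ i, c i = 0 → c' i = 0 := by
        intro i hi
        simp [hc', hi, hDsupp i hi]
      have hc'sum : ∑ i, c' i • v i = ∑ i, c i • v i := by
        simp only [hc', sub_smul, Finset.sum_sub_distrib, mul_smul]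
        rw [← Finset.smul_sum, hDsum, smul_zero, sub_zero]
      have hc'i₀ : c' i₀ = 0 := by
        simp [hc', htdef, div_mul_cancel₀ _ hDi₀.ne']
      have hci₀ : c i₀ ≠ 0 := fun hzero => hDi₀.ne' (hDsupp i₀ hzero)
      have hsub : (Finset.univ.filter fun i => c' i ≠ 0) ⊂
          Finset.univ.filter fun i => c i ≠ 0 := by
        refine Finset.ssubset_iff_of_subset (fun i hi => ?_) |>.mpr
          ⟨i₀, by simp [hci₀], by simp [hc'i₀]⟩
        simp only [Finset.mem_filter, Finset.mem_univ, true_and] at hi ⊢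
        intro hzero; exact hi (hc'supp i hzero)
      have hcard' : (Finset.univ.filter fun i => c' i ≠ 0).card ≤ N := by
        have := Finset.card_lt_card hsub
        omega
      obtain ⟨c'', h1, h2, h3, h4⟩ := ih c' hc'nonneg hcard'
      exact ⟨c'', h1, fun i hi => h2 i (hc'supp i hi), h3.trans hc'sum, h4⟩

theorem sum_of_normal_cones_closed_of_slater
    {Ω : Type*} [MeasurableSpace Ω] (μ : Measure Ω) [SigmaFinite μ]
    (p q : ℝ≥0∞) [Fact (1 ≤ p)] [Fact (1 ≤ q)] (hp : 1 < p) (hpq : p⁻¹ + q⁻¹ = 1)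
    (xa xb : Ω → EReal) (hxa : Measurable xa) (hxb : Measurable xb)
    (n m : ℕ) (g : Fin n → Lp ℝ q μ) (a : Fin n → ℝ)
    (h : Fin m → Lp ℝ q μ) (b : Fin m → ℝ)
    (K P : Set (Lp ℝ p μ))
    (hK : K = {y : Lp ℝ p μ | ∀ᵐ ω ∂μ, xa ω ≤ (y ω : EReal) ∧ (y ω : EReal) ≤ xb ω})
    (hP : P = {y : Lp ℝ p μ | (∀ i, pairing μ (g i) y ≤ a i) ∧ (∀ j, pairing μ (h j) y = b j)})
    -- existence of a Slater point
    (xhat : Lp ℝ p μ)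
    (hslater₁ : ∀ᵐ ω ∂μ, xa ω < (xhat ω : EReal) ∧ (xhat ω : EReal) < xb ω)
    (hslater₂ : ∀ i, pairing μ (g i) xhat ≤ a i)
    (hslater₃ : ∀ j, pairing μ (h j) xhat = b j)
    (x : Lp ℝ p μ) (hx : x ∈ K ∩ P)
    (NK NP : Set (Lp ℝ q μ))
    (hNK : NK = {ζ : Lp ℝ q μ |
        (∀ᵐ ω ∂μ, (xa ω = (x ω : EReal) ∧ (x ω : EReal) < xb ω) → ζ ω ≤ 0) ∧
        (∀ᵐ ω ∂μ, (xa ω < (x ω : EReal) ∧ (x ω : EReal) < xb ω) → ζ ω = 0) ∧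
        (∀ᵐ ω ∂μ, (xa ω < (x ω : EReal) ∧ (x ω : EReal) = xb ω) → 0 ≤ ζ ω)})
    (hNP : NP = {ξ : Lp ℝ q μ | ∃ (α : Fin n → ℝ) (β : Fin m → ℝ),
        (∀ i, 0 ≤ α i) ∧ (∀ i, pairing μ (g i) x ≠ a i → α i = 0) ∧
        ξ = ∑ i, α i • g i + ∑ j, β j • h j}) :
    IsClosed (NK + NP) := by
  classical
  have hxK : ∀ᵐ ω ∂μ, xa ω ≤ (x ω : EReal) ∧ (x ω : EReal) ≤ xb ω := by
    have := hx.1; rw [hK] at this; exact this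
  have hxP : (∀ i, pairing μ (g i) x ≤ a i) ∧ (∀ j, pairing μ (h j) x = b j) := by
    have := hx.2; rw [hP] at this; exact this
  -- NK is closed
  have hNKclosed : IsClosed NK := by
    rw [hNK]
    have e : {ζ : Lp ℝ q μ |
        (∀ᵐ ω ∂μ, (xa ω = (x ω : EReal) ∧ (x ω : EReal) < xb ω) → ζ ω ≤ 0) ∧
        (∀ᵐ ω ∂μ, (xa ω < (x ω : EReal) ∧ (x ω : EReal) < xb ω) → ζ ω = 0) ∧
        (∀ᵐ ω ∂μ, (xa ω < (x ω : EReal) ∧ (x ω : EReal) = xb ω) → 0 ≤ ζ ω)} =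
        ({ζ : Lp ℝ q μ | ∀ᵐ ω ∂μ,
            ω ∈ {ω | xa ω = (x ω : EReal) ∧ (x ω : EReal) < xb ω} → ζ ω ≤ 0} ∩
         ({ζ : Lp ℝ q μ | ∀ᵐ ω ∂μ,
            ω ∈ {ω | xa ω < (x ω : EReal) ∧ (x ω : EReal) < xb ω} → ζ ω ≤ 0} ∩
          {ζ : Lp ℝ q μ | ∀ᵐ ω ∂μ,
            ω ∈ {ω | xa ω < (x ω : EReal) ∧ (x ω : EReal) < xb ω} → 0 ≤ ζ ω})) ∩
        {ζ : Lp ℝ q μ | ∀ᵐ ω ∂μ,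
            ω ∈ {ω | xa ω < (x ω : EReal) ∧ (x ω : EReal) = xb ω} → 0 ≤ ζ ω} := by
      ext ζ
      simp only [Set.mem_inter_iff, Set.mem_setOf_eq]
      constructor
      · rintro ⟨h1, h2, h3⟩
        exact ⟨⟨h1, h2.mono fun ω hω hc => (hω hc).le, h2.mono fun ω hω hc => (hω hc).ge⟩, h3⟩
      · rintro ⟨⟨h1, h2a, h2b⟩, h3⟩
        refine ⟨h1, ?_, h3⟩
        filter_upwards [h2a, h2b] with ω ha hb hc
        exact le_antisymm (ha hc) (hb hc)
    rw [e]
    exact ((isClosed_ae_nonpos _).inter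
      ((isClosed_ae_nonpos _).inter (isClosed_ae_nonneg _))).inter (isClosed_ae_nonneg _)
  -- NK is a cone
  have hNKcone : ∀ (t : ℝ), 0 ≤ t → ∀ ζ ∈ NK, t • ζ ∈ NK := by
    rw [hNK]
    rintro t ht ζ ⟨h1, h2, h3⟩
    refine ⟨?_, ?_, ?_⟩
    · filter_upwards [Lp.coeFn_smul t ζ, h1] with ω hs hω hc
      rw [hs, Pi.smul_apply, smul_eq_mul]
      exact mul_nonpos_of_nonneg_of_nonpos ht (hω hc)
    · filter_upwards [Lp.coeFn_smul t ζ, h2] with ω hs hω hc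
      rw [hs, Pi.smul_apply, smul_eq_mul, hω hc, mul_zero]
    · filter_upwards [Lp.coeFn_smul t ζ, h3] with ω hs hω hc
      rw [hs, Pi.smul_apply, smul_eq_mul]
      exact mul_nonneg ht (hω hc)
  -- the Slater key lemma
  have key : ∀ ξ ∈ NP, -ξ ∈ NK → ξ = 0 := by
    intro ξ hξNP hξNK
    rw [hNP] at hξNP
    rw [hNK] at hξNK
    obtain ⟨α, β, hα, hinact, hξeq⟩ := hξNP
    obtain ⟨k1, k2, k3⟩ := hξNK
    set z := xhat - x with hzdef
    have hae : ∀ᵐ ω ∂μ, ((-ξ) ω * z ω ≤ 0) ∧ ((-ξ) ω * z ω = 0 → (-ξ) ω = 0) := by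
      filter_upwards [k1, k2, k3, hxK, hslater₁, Lp.coeFn_sub xhat x]
        with ω k1ω k2ω k3ω hbd hsl hzω
      have hzv : z ω = xhat ω - x ω := by rw [hzdef, hzω, Pi.sub_apply]
      obtain ⟨hl, hr⟩ := hbd
      rcases lt_or_eq_of_le hl with hlt | heq
      · rcases lt_or_eq_of_le hr with hrt | hre
        · have h0 : (-ξ) ω = 0 := k2ω ⟨hlt, hrt⟩
          exact ⟨by rw [h0, zero_mul], fun _ => h0⟩
        · -- xa < ↑x = xb
          have h0 : 0 ≤ (-ξ) ω := k3ω ⟨hlt, hre⟩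
          have hneg : xhat ω < x ω := by
            have h' : ((xhat ω : ℝ) : EReal) < ((x ω : ℝ) : EReal) := by
              rw [hre]; exact hsl.2
            exact EReal.coe_lt_coe_iff.mp h'
          constructor
          · rw [hzv]; nlinarith
          · intro hz0; rw [hzv] at hz0
            rcases mul_eq_zero.mp hz0 with h' | h'
            · exact h'
            · exfalso; nlinarith
      · rcases lt_or_eq_of_le hr with hrt | hre
        · -- xa = ↑x < xb
          have h0 : (-ξ) ω ≤ 0 := k1ω ⟨heq, hrt⟩
          have hpos : x ω < xhat ω := by
            have h' : ((x ω : ℝ) : EReal) < ((xhat ω : ℝ) : EReal) := by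
              rw [← heq]; exact hsl.1
            exact EReal.coe_lt_coe_iff.mp h'
          constructor
          · rw [hzv]; nlinarith
          · intro hz0; rw [hzv] at hz0
            rcases mul_eq_zero.mp hz0 with h' | h'
            · exact h'
            · exfalso; nlinarith
        · exfalso
          have h1 : xa ω < (xhat ω : EReal) := hsl.1
          have h2 : (xhat ω : EReal) < xa ω := by
            rw [heq, hre]; exact hsl.2
          exact lt_asymm h1 h2
    have hr_le : pairing μ (-ξ) z ≤ 0 :=
      integral_nonpos_of_ae (hae.mono fun ω hω => hω.1)
    have hcomb : ∀ u : Lp ℝ p μ, pairing μ ξ u =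
        ∑ i, α i * pairing μ (g i) u + ∑ j, β j * pairing μ (h j) u := by
      intro u
      rw [hξeq, pairing_add_left hpq, pairing_sum_left hpq, pairing_sum_left hpq]
      simp [pairing_smul_left]
    have hsum_nonpos : pairing μ ξ z ≤ 0 := by
      rw [hzdef, pairing_sub_right hpq, hcomb xhat, hcomb x]
      have hβ : ∑ j, β j * pairing μ (h j) xhat = ∑ j, β j * pairing μ (h j) x :=
        Finset.sum_congr rfl fun j _ => by rw [hslater₃ j, hxP.2 j]
      have hg : ∑ i, α i * pairing μ (g i) xhat ≤ ∑ i, α i * pairing μ (g i) x := by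
        apply Finset.sum_le_sum
        intro i _
        by_cases hac : pairing μ (g i) x = a i
        · rw [hac]; exact mul_le_mul_of_nonneg_left (hslater₂ i) (hα i)
        · rw [hinact i hac]; simp
      linarith
    have hge : 0 ≤ pairing μ (-ξ) z := by
      rw [pairing_neg_left]; linarith
    have hzero : pairing μ (-ξ) z = 0 := le_antisymm hr_le hge
    have hnonneg_ae : 0 ≤ᵐ[μ] fun ω => -((-ξ) ω * z ω) :=
      hae.mono fun ω hω => by simpa using hω.1
    have hint' : Integrable (fun ω => -((-ξ) ω * z ω)) μ :=
      (integrable_mul_Lp hpq (-ξ) z).neg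
    have hI : ∫ ω, -((-ξ) ω * z ω) ∂μ = 0 := by
      rw [integral_neg]
      have : ∫ ω, (-ξ) ω * z ω ∂μ = 0 := hzero
      rw [this, neg_zero]
    have hae0 := (integral_eq_zero_iff_of_nonneg_ae hnonneg_ae hint').mp hI
    have hξ0 : (-ξ : Lp ℝ q μ) = 0 := by
      rw [Lp.eq_zero_iff_ae_eq_zero]
      filter_upwards [hae0, hae] with ω h0 hω
      have : (-ξ) ω * z ω = 0 := by
        have := h0
        simpa [neg_eq_zero] using this
      exact hω.2 this
    simpa [neg_eq_zero] using hξ0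
  -- Setting up the finite-dimensional machinery
  set V : (Fin n ⊕ (Fin m ⊕ Fin m)) → Lp ℝ q μ :=
    Sum.elim g (Sum.elim h fun j => -h j) with hV
  set T : ((Fin n ⊕ (Fin m ⊕ Fin m)) → ℝ) → Lp ℝ q μ := fun c => ∑ i, c i • V i with hT
  have hTcont : Continuous T := by
    rw [hT]
    exact continuous_finset_sum _ fun i _ => (continuous_apply i).smul continuous_const
  set Cset : Set ((Fin n ⊕ (Fin m ⊕ Fin m)) → ℝ) :=
    {c | (∀ i, 0 ≤ c i) ∧ ∀ i : Fin n, pairing μ (g i) x ≠ a i → c (Sum.inl i) = 0} with hCset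
  have hsplit : ∀ c : (Fin n ⊕ (Fin m ⊕ Fin m)) → ℝ,
      T c = ∑ i, c (Sum.inl i) • g i +
        (∑ j, c (Sum.inr (Sum.inl j)) • h j + ∑ j, c (Sum.inr (Sum.inr j)) • (-h j)) := by
    intro c
    show ∑ i, c i • V i = _
    rw [Fintype.sum_sum_type, Fintype.sum_sum_type]
    simp only [hV, Sum.elim_inl, Sum.elim_inr]
  have hNPsub : ∀ c ∈ Cset, T c ∈ NP := by
    rintro c ⟨hc1, hc2⟩
    rw [hNP]
    refine ⟨fun i => c (Sum.inl i),
      fun j => c (Sum.inr (Sum.inl j)) - c (Sum.inr (Sum.inr j)),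
      fun i => hc1 _, hc2, ?_⟩
    rw [hsplit]
    congr 1
    rw [← Finset.sum_add_distrib]
    apply Finset.sum_congr rfl
    intro j _
    rw [sub_smul, smul_neg, sub_eq_add_neg]
  have hNPsup : ∀ ξ₀ ∈ NP, ∃ c ∈ Cset, T c = ξ₀ := by
    intro ξ₀ hξ₀
    rw [hNP] at hξ₀
    obtain ⟨α, β, hα, hinact, rfl⟩ := hξ₀
    refine ⟨Sum.elim α (Sum.elim (fun j => max (β j) 0) (fun j => max (-β j) 0)), ⟨?_, ?_⟩, ?_⟩
    · rintro (i | j | j) <;> simp [hα, le_max_right]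
    · intro i hi; simpa using hinact i hi
    · rw [hsplit]
      simp only [Sum.elim_inl, Sum.elim_inr]
      congr 1
      rw [← Finset.sum_add_distrib]
      apply Finset.sum_congr rfl
      intro j _
      rw [smul_neg, ← sub_eq_add_neg, ← sub_smul, max_zero_sub_max_neg_zero_eq_self]
  -- main argument
  apply IsSeqClosed.isClosed
  intro F w hF hFw
  have hdecomp : ∀ k, ∃ ζ ∈ NK, ∃ ξ ∈ NP, ζ + ξ = F k := fun k => Set.mem_add.mp (hF k)
  choose ζ hζ ξ hξ hsum using hdecomp
  have hrepr : ∀ k, ∃ c, c ∈ Cset ∧ T c = ξ k ∧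
      LinearIndependent ℝ (fun i : {i // c i ≠ 0} => V (i : Fin n ⊕ (Fin m ⊕ Fin m))) := by
    intro k
    obtain ⟨c0, hc0, hTc0⟩ := hNPsup (ξ k) (hξ k)
    obtain ⟨c', h1, h2, h3, h4⟩ := caratheodory_cone V (Fintype.card (Fin n ⊕ (Fin m ⊕ Fin m)))
      c0 hc0.1 (by simpa using Finset.card_filter_le Finset.univ fun i => c0 i ≠ 0)
    refine ⟨c', ⟨h1, fun i hi => h2 _ (hc0.2 i hi)⟩, ?_, h4⟩
    rw [← hTc0, hT]; exact h3
  choose d hdC hdT hdLI using hrepr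
  obtain ⟨S, hSinf⟩ :=
    Finite.exists_infinite_fiber (fun k => Finset.univ.filter fun i => d k i ≠ 0)
  rw [Set.infinite_coe_iff] at hSinf
  obtain ⟨φ, hφmono, hφS⟩ :=
    Filter.extraction_of_frequently_atTop (Nat.frequently_atTop_iff_infinite.mpr hSinf)
  have hmemS : ∀ k i, d (φ k) i ≠ 0 ↔ i ∈ S := by
    intro k i
    have := hφS k
    simp only [Set.mem_preimage, Set.mem_singleton_iff] at this
    rw [← this]
    simp
  have hindepS : LinearIndependent ℝ
      (fun i : {i // i ∈ S} => V (i : Fin n ⊕ (Fin m ⊕ Fin m))) := by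
    have hinj : Function.Injective
        (fun i : {i // i ∈ S} => (⟨i.1, (hmemS 0 i.1).mpr i.2⟩ : {i // d (φ 0) i ≠ 0})) := by
      intro a' b' hab
      exact Subtype.ext (by simpa using congrArg Subtype.val hab)
    have h' := (hdLI (φ 0)).comp _ hinj
    exact h'
  by_cases hbdd : ∃ M, ∀ k, ‖d (φ k)‖ ≤ M
  · -- bounded coefficients: extract convergent subsequence
    obtain ⟨M, hM⟩ := hbdd
    obtain ⟨u, -, φ2, hφ2mono, hu⟩ :=
      (isCompact_closedBall (0 : (Fin n ⊕ (Fin m ⊕ Fin m)) → ℝ) M).tendsto_subseq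
        (fun k => mem_closedBall_zero_iff.mpr (hM k))
    have hu : Tendsto (fun k => d (φ (φ2 k))) atTop (𝓝 u) := hu
    have hcomp : ∀ i, Tendsto (fun k => d (φ (φ2 k)) i) atTop (𝓝 (u i)) := fun i =>
      ((continuous_apply i).tendsto u).comp hu
    have huC : u ∈ Cset := by
      constructor
      · intro i
        exact ge_of_tendsto' (hcomp i) fun k => (hdC _).1 i
      · intro i hi
        have hz : (fun k => d (φ (φ2 k)) (Sum.inl i)) = fun _ => (0 : ℝ) :=
          funext fun k => (hdC _).2 i hi
        have := hcomp (Sum.inl i)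
        rw [hz] at this
        exact (tendsto_nhds_unique this tendsto_const_nhds)
    have hTu : Tendsto (fun k => T (d (φ (φ2 k)))) atTop (𝓝 (T u)) := (hTcont.tendsto u).comp hu
    have hξconv : Tendsto (fun k => ξ (φ (φ2 k))) atTop (𝓝 (T u)) := by
      have he : (fun k => T (d (φ (φ2 k)))) = fun k => ξ (φ (φ2 k)) :=
        funext fun k => hdT _
      rwa [he] at hTu
    have hFconv : Tendsto (fun k => F (φ (φ2 k))) atTop (𝓝 w) :=
      hFw.comp ((hφmono.comp hφ2mono).tendsto_atTop)
    have hζconv : Tendsto (fun k => ζ (φ (φ2 k))) atTop (𝓝 (w - T u)) := by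
      have he : (fun k => ζ (φ (φ2 k))) = fun k => F (φ (φ2 k)) - ξ (φ (φ2 k)) :=
        funext fun k => (eq_sub_of_add_eq (hsum _))
      rw [he]
      exact hFconv.sub hξconv
    have hwNK : w - T u ∈ NK :=
      hNKclosed.mem_of_tendsto hζconv (Eventually.of_forall fun k => hζ _)
    have hw : w = (w - T u) + T u := (sub_add_cancel w (T u)).symm
    rw [hw]
    exact Set.add_mem_add hwNK (hNPsub u huC)
  · -- unbounded coefficients: derive a contradiction with the Slater condition
    exfalso
    push_neg at hbdd
    choose ψ hψ using fun j : ℕ => hbdd j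
    set t : ℕ → ℝ := fun j => ‖d (φ (ψ j))‖ with htdef
    have htpos : ∀ j, 0 < t j := fun j => lt_of_le_of_lt (Nat.cast_nonneg j) (hψ j)
    have htinf : Tendsto t atTop atTop :=
      tendsto_atTop_mono (fun j => (hψ j).le) tendsto_natCast_atTop_atTop
    set useq : ℕ → ((Fin n ⊕ (Fin m ⊕ Fin m)) → ℝ) := fun j => (t j)⁻¹ • d (φ (ψ j))
      with huseq
    have hunorm : ∀ j, ‖useq j‖ = 1 := by
      intro j
      have h1 : useq j = (t j)⁻¹ • d (φ (ψ j)) := rfl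
      have h2 : t j = ‖d (φ (ψ j))‖ := rfl
      rw [h1, norm_smul, norm_inv, Real.norm_eq_abs, abs_of_pos (htpos j), h2]
      exact inv_mul_cancel₀ (by rw [← h2]; exact (htpos j).ne')
    obtain ⟨u, -, φ2, hφ2mono, hu⟩ :=
      (isCompact_closedBall (0 : (Fin n ⊕ (Fin m ⊕ Fin m)) → ℝ) 1).tendsto_subseq
        (fun j => mem_closedBall_zero_iff.mpr (hunorm j).le)
    have hu : Tendsto (fun k => useq (φ2 k)) atTop (𝓝 u) := hu
    have hcomp : ∀ i, Tendsto (fun k => useq (φ2 k) i) atTop (𝓝 (u i)) := fun i =>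
      ((continuous_apply i).tendsto u).comp hu
    have hunorm1 : ‖u‖ = 1 := by
      have h1 : Tendsto (fun k => ‖useq (φ2 k)‖) atTop (𝓝 ‖u‖) :=
        (continuous_norm.tendsto u).comp hu
      have h2 : (fun k => ‖useq (φ2 k)‖) = fun _ => (1 : ℝ) := funext fun k => hunorm _
      rw [h2] at h1
      exact tendsto_nhds_unique h1 tendsto_const_nhds
    have hune : u ≠ 0 := by
      intro h0
      rw [h0, norm_zero] at hunorm1
      norm_num at hunorm1
    have huC : u ∈ Cset := by
      constructor
      · intro i
        refine ge_of_tendsto' (hcomp i) fun k => ?_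
        exact mul_nonneg (inv_nonneg.mpr (htpos _).le) ((hdC _).1 i)
      · intro i hi
        have hz : (fun k => useq (φ2 k) (Sum.inl i)) = fun _ => (0 : ℝ) := by
          funext k
          rw [huseq]
          simp [(hdC _).2 i hi]
        have := hcomp (Sum.inl i)
        rw [hz] at this
        exact tendsto_nhds_unique this tendsto_const_nhds
    have husupp : ∀ i, i ∉ S → u i = 0 := by
      intro i hi
      have hz : (fun k => useq (φ2 k) i) = fun _ => (0 : ℝ) := by
        funext k
        have hd0 : d (φ (ψ (φ2 k))) i = 0 := by
          by_contra hne
          exact hi ((hmemS _ i).mp hne)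
        rw [huseq]
        simp [hd0]
      have := hcomp i
      rw [hz] at this
      exact tendsto_nhds_unique this tendsto_const_nhds
    have hTsmul : ∀ (r : ℝ) (c : (Fin n ⊕ (Fin m ⊕ Fin m)) → ℝ), T (r • c) = r • T c := by
      intro r c
      rw [hT]
      simp only [Pi.smul_apply, smul_eq_mul, mul_smul]
      rw [← Finset.smul_sum]
    have hTu : Tendsto (fun k => T (useq (φ2 k))) atTop (𝓝 (T u)) := (hTcont.tendsto u).comp hu
    obtain ⟨B, hB⟩ : ∃ B, ∀ k, ‖F k‖ ≤ B := by
      obtain ⟨B, hB⟩ := (hFw.norm).bddAbove_range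
      exact ⟨B, fun k => hB ⟨k, rfl⟩⟩
    have hzconv : Tendsto (fun k => (t (φ2 k))⁻¹ • ζ (φ (ψ (φ2 k)))) atTop (𝓝 (-(T u))) := by
      have heq : ∀ k, (t (φ2 k))⁻¹ • ζ (φ (ψ (φ2 k))) =
          (t (φ2 k))⁻¹ • F (φ (ψ (φ2 k))) - T (useq (φ2 k)) := by
        intro k
        have h1 : ζ (φ (ψ (φ2 k))) = F (φ (ψ (φ2 k))) - ξ (φ (ψ (φ2 k))) :=
          eq_sub_of_add_eq (hsum _)
        rw [h1, smul_sub]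
        congr 1
        rw [huseq]
        simp only []
        rw [hTsmul, hdT]
      have h1 : Tendsto (fun k => (t (φ2 k))⁻¹ • F (φ (ψ (φ2 k)))) atTop (𝓝 0) := by
        apply squeeze_zero_norm (a := fun k => (t (φ2 k))⁻¹ * B)
        · intro k
          rw [norm_smul, norm_inv, norm_norm]
          exact mul_le_mul_of_nonneg_left (hB _) (inv_nonneg.mpr (htpos _).le)
        · have h2 : Tendsto (fun k => (t (φ2 k))⁻¹) atTop (𝓝 0) :=
            tendsto_inv_atTop_zero.comp (htinf.comp hφ2mono.tendsto_atTop)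
          simpa using h2.mul_const B
      have h3 := h1.sub hTu
      rw [zero_sub] at h3
      have he : (fun k => (t (φ2 k))⁻¹ • ζ (φ (ψ (φ2 k)))) =
          fun k => (t (φ2 k))⁻¹ • F (φ (ψ (φ2 k))) - T (useq (φ2 k)) := funext heq
      rw [he]
      exact h3
    have hnegNK : -(T u) ∈ NK :=
      hNKclosed.mem_of_tendsto hzconv
        (Eventually.of_forall fun k => hNKcone _ (inv_nonneg.mpr (htpos _).le) _ (hζ _))
    have hTu0 : T u = 0 := key (T u) (hNPsub u huC) hnegNK
    have hsum0 : ∑ i ∈ S, u i • V i = 0 := by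
      rw [Finset.sum_subset (S.subset_univ) (fun i _ hi => by rw [husupp i hi, zero_smul])]
      rw [hT] at hTu0
      exact hTu0
    have hzS : ∀ i ∈ S, u i = 0 := by
      have hsub : ∑ i : {i // i ∈ S}, u i • V (i : Fin n ⊕ (Fin m ⊕ Fin m)) = 0 := by
        rw [Finset.sum_coe_sort S (fun i => u i • V i)]
        exact hsum0
      have := Fintype.linearIndependent_iff.mp hindepS (fun i => u (i : _)) hsub
      intro i hi
      exact this ⟨i, hi⟩
    apply hune
    funext i
    by_cases hi : i ∈ S
    · exact hzS i hi
    · exact husupp i hi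
end
end

section
/- Suppose x_a < x_b holds μ-a.e. Then the set K̂ := {x ∈ L^p(μ) : x_a < x < x_b μ-a.e.} is dense in K := {x ∈ L^p(μ) : x_a ≤ x ≤ x_b μ-a.e.}; in particular K̂ is nonempty whenever K is nonempty. -/
open MeasureTheory Filter Topology Pointwise
open scoped ENNReal Classical

noncomputable section

open scoped NNReal

-- convex combination lemma
lemma combo_aux {a b : EReal} {f y t : ℝ} (haf : a ≤ (f : EReal)) (hfb : (f : EReal) ≤ b)
    (hay : a < (y : EReal)) (hyb : (y : EReal) < b) (ht0 : 0 < t) (ht1 : t ≤ 1) :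
    a < ((f + t * (y - f) : ℝ) : EReal) ∧ ((f + t * (y - f) : ℝ) : EReal) < b := by
  constructor
  · induction a using EReal.rec with
    | bot => exact EReal.bot_lt_coe _
    | coe r =>
      rw [EReal.coe_le_coe_iff] at haf
      rw [EReal.coe_lt_coe_iff] at hay
      rw [EReal.coe_lt_coe_iff]
      nlinarith
    | top => exact absurd haf (by simp)
  · induction b using EReal.rec with
    | bot => exact absurd hfb (by simp)
    | coe r =>
      rw [EReal.coe_le_coe_iff] at hfb
      rw [EReal.coe_lt_coe_iff] at hyb
      rw [EReal.coe_lt_coe_iff]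
      nlinarith
    | top => exact EReal.coe_lt_top _

-- MemLp of the truncated positive function
lemma memLp_min_one_aux {Ω : Type*} [MeasurableSpace Ω] (μ : Measure Ω) (p : ℝ≥0∞)
    (hp : 1 ≤ p) (g : Ω → ℝ≥0) (hg : Measurable g) (hint : ∫⁻ x, g x ∂μ < 1) :
    MemLp (fun ω => min (g ω : ℝ) 1) p μ := by
  have hmeas : Measurable fun ω => min (g ω : ℝ) 1 :=
    (hg.coe_nnreal_real).min measurable_const
  have hbd : ∀ ω, ‖min (g ω : ℝ) 1‖ ≤ 1 := by
    intro ω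
    rw [Real.norm_eq_abs, abs_of_nonneg (le_min (g ω).coe_nonneg zero_le_one)]
    exact min_le_right _ _
  by_cases hptop : p = ∞
  · subst hptop
    exact memLp_top_of_bound hmeas.aestronglyMeasurable 1 (Eventually.of_forall hbd)
  · have hp0 : p ≠ 0 := by positivity
    refine ⟨hmeas.aestronglyMeasurable, ?_⟩
    rw [eLpNorm_eq_lintegral_rpow_enorm_toReal hp0 hptop]
    have h1p : 1 ≤ p.toReal := by
      rw [← ENNReal.toReal_one]
      exact ENNReal.toReal_mono hptop hp
    have hb : ∀ ω, (‖min (g ω : ℝ) 1‖₊ : ℝ≥0∞) ^ p.toReal ≤ (g ω : ℝ≥0∞) := by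
      intro ω
      have h1 : (‖min (g ω : ℝ) 1‖₊ : ℝ≥0∞) ≤ 1 := by
        rw [← ENNReal.coe_one, ENNReal.coe_le_coe, ← NNReal.coe_le_coe]
        simpa using hbd ω
      have h2 : (‖min (g ω : ℝ) 1‖₊ : ℝ≥0∞) ≤ (g ω : ℝ≥0∞) := by
        rw [ENNReal.coe_le_coe, ← NNReal.coe_le_coe]
        calc (‖min (g ω : ℝ) 1‖₊ : ℝ) = |min (g ω : ℝ) 1| := by simp [Real.norm_eq_abs]
        _ ≤ (g ω : ℝ) := by
            rw [abs_of_nonneg (le_min (g ω).coe_nonneg zero_le_one)]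
            exact min_le_left _ _
      calc (‖min (g ω : ℝ) 1‖₊ : ℝ≥0∞) ^ p.toReal ≤ (‖min (g ω : ℝ) 1‖₊ : ℝ≥0∞) ^ (1:ℝ) :=
            ENNReal.rpow_le_rpow_of_exponent_ge h1 h1p
      _ ≤ _ := by rw [ENNReal.rpow_one]; exact h2
    refine ENNReal.rpow_lt_top_of_nonneg (by positivity) ?_
    exact ((lintegral_mono hb).trans_lt (hint.trans_le le_top)).ne

lemma exists_hat_aux {Ω : Type*} [MeasurableSpace Ω] {μ : Measure Ω} [SigmaFinite μ] {p : ℝ≥0∞}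
    [Fact (1 ≤ p)] (hp : 1 ≤ p) (xa xb : Ω → EReal) (hxa : Measurable xa) (hxb : Measurable xb)
    (hab : ∀ᵐ ω ∂μ, xa ω < xb ω) (x : Lp ℝ p μ)
    (hx : ∀ᵐ ω ∂μ, xa ω ≤ (x ω : EReal) ∧ (x ω : EReal) ≤ xb ω) :
    ∃ xh : Lp ℝ p μ, ∀ t : ℝ, 0 < t → t ≤ 1 →
      ∀ᵐ ω ∂μ, xa ω < ((x ω + t * (xh ω - x ω) : ℝ) : EReal) ∧
        ((x ω + t * (xh ω - x ω) : ℝ) : EReal) < xb ω := by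
  obtain ⟨g, hgpos, hgmeas, hgint⟩ := exists_pos_lintegral_lt_of_sigmaFinite μ one_ne_zero
  set w : Ω → ℝ := fun ω => min (g ω : ℝ) 1 with hwdef
  have hwpos : ∀ ω, 0 < w ω := fun ω => lt_min (hgpos ω) one_pos
  have hwmeas : Measurable w := hgmeas.coe_nnreal_real.min measurable_const
  have hwmem : MemLp w p μ := memLp_min_one_aux μ p hp g hgmeas hgint
  set f : Ω → ℝ := (Lp.aestronglyMeasurable x).mk ⇑x with hfdef
  have hfm : Measurable f := ((Lp.aestronglyMeasurable x).stronglyMeasurable_mk).measurable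
  have hfx : ⇑x =ᵐ[μ] f := (Lp.aestronglyMeasurable x).ae_eq_mk
  set dUp : Ω → ℝ :=
    fun ω => min (w ω) (if xb ω = ⊤ then w ω else (xb ω).toReal - f ω) / 2 with hdUp
  set dDn : Ω → ℝ :=
    fun ω => min (w ω) (if xa ω = ⊥ then w ω else f ω - (xa ω).toReal) / 2 with hdDn
  set y : Ω → ℝ := fun ω => if xa ω < (f ω : EReal) then
      (if (f ω : EReal) < xb ω then f ω else f ω - dDn ω) else f ω + dUp ω with hydef
  have hfE : Measurable fun ω => (f ω : EReal) := measurable_coe_real_ereal.comp hfm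
  have hymeas : Measurable y := by
    apply Measurable.ite (measurableSet_lt hxa hfE)
    · apply Measurable.ite (measurableSet_lt hfE hxb) hfm
      exact hfm.sub ((hwmeas.min (Measurable.ite (hxa (measurableSet_singleton ⊥)) hwmeas
        (hfm.sub hxa.ereal_toReal))).div_const 2)
    · exact hfm.add ((hwmeas.min (Measurable.ite (hxb (measurableSet_singleton ⊤)) hwmeas
        (hxb.ereal_toReal.sub hfm))).div_const 2)
  have hkey : ∀ ω, xa ω ≤ (f ω : EReal) → (f ω : EReal) ≤ xb ω → xa ω < xb ω →
      (xa ω < (y ω : EReal) ∧ (y ω : EReal) < xb ω) ∧ |y ω - f ω| ≤ w ω := by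
    intro ω haf hfb hab'
    by_cases h1 : xa ω < (f ω : EReal)
    · by_cases h2 : (f ω : EReal) < xb ω
      · have hy : y ω = f ω := by simp only [hydef, if_pos h1, if_pos h2]
        rw [hy]
        exact ⟨⟨h1, h2⟩, by simpa using (hwpos ω).le⟩
      · have hbe : xb ω = (f ω : EReal) := le_antisymm (not_lt.1 h2) hfb
        have hy : y ω = f ω - dDn ω := by simp only [hydef, if_pos h1, if_neg h2]
        have hcpos : 0 < (if xa ω = ⊥ then w ω else f ω - (xa ω).toReal) := by
          by_cases hb : xa ω = ⊥
          · simpa [hb] using hwpos ω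
          · have hta : xa ω ≠ ⊤ := (h1.trans (EReal.coe_lt_top _)).ne
            have hco : ((xa ω).toReal : EReal) = xa ω := EReal.coe_toReal hta hb
            have : (xa ω).toReal < f ω := by rw [← EReal.coe_lt_coe_iff, hco]; exact h1
            simpa [hb] using this
        have hdpos : 0 < dDn ω := by
          rw [hdDn]
          have := lt_min (hwpos ω) hcpos
          linarith
        have hdle : dDn ω ≤ w ω := by
          have h3 := min_le_left (w ω) (if xa ω = ⊥ then w ω else f ω - (xa ω).toReal)
          have := hwpos ω
          rw [hdDn]; dsimp only; linarith
        refine ⟨⟨?_, ?_⟩, ?_⟩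
        · by_cases hb : xa ω = ⊥
          · rw [hb]; exact EReal.bot_lt_coe _
          · have hta : xa ω ≠ ⊤ := (h1.trans (EReal.coe_lt_top _)).ne
            have hco : ((xa ω).toReal : EReal) = xa ω := EReal.coe_toReal hta hb
            have hrf : (xa ω).toReal < f ω := by rw [← EReal.coe_lt_coe_iff, hco]; exact h1
            rw [← hco, EReal.coe_lt_coe_iff, hy]
            have h4 := min_le_right (w ω) (if xa ω = ⊥ then w ω else f ω - (xa ω).toReal)
            rw [if_neg hb] at h4
            rw [hdDn]; dsimp only; rw [if_neg hb]
            have := min_le_left (w ω) (f ω - (xa ω).toReal)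
            linarith [lt_min (hwpos ω) hcpos]
        · rw [hbe, hy, EReal.coe_lt_coe_iff]; linarith
        · rw [hy]
          rw [abs_of_nonpos (by linarith)]
          linarith
    · have hae' : xa ω = (f ω : EReal) := le_antisymm haf (not_lt.1 h1)
      have hfbs : (f ω : EReal) < xb ω := hae' ▸ hab'
      have hy : y ω = f ω + dUp ω := by simp only [hydef, if_neg h1]
      have hcpos : 0 < (if xb ω = ⊤ then w ω else (xb ω).toReal - f ω) := by
        by_cases ht : xb ω = ⊤
        · simpa [ht] using hwpos ω
        · have htb : xb ω ≠ ⊥ := ((EReal.bot_lt_coe _).trans hfbs).ne'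
          have hco : ((xb ω).toReal : EReal) = xb ω := EReal.coe_toReal ht htb
          have : f ω < (xb ω).toReal := by rw [← EReal.coe_lt_coe_iff, hco]; exact hfbs
          simpa [ht] using this
      have hdpos : 0 < dUp ω := by
        rw [hdUp]
        have := lt_min (hwpos ω) hcpos
        linarith
      have hdle : dUp ω ≤ w ω := by
        have h3 := min_le_left (w ω) (if xb ω = ⊤ then w ω else (xb ω).toReal - f ω)
        have := hwpos ω
        rw [hdUp]; dsimp only; linarith
      refine ⟨⟨?_, ?_⟩, ?_⟩
      · rw [hae', hy, EReal.coe_lt_coe_iff]; linarith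
      · by_cases ht : xb ω = ⊤
        · rw [ht]; exact EReal.coe_lt_top _
        · have htb : xb ω ≠ ⊥ := ((EReal.bot_lt_coe _).trans hfbs).ne'
          have hco : ((xb ω).toReal : EReal) = xb ω := EReal.coe_toReal ht htb
          have hrf : f ω < (xb ω).toReal := by rw [← EReal.coe_lt_coe_iff, hco]; exact hfbs
          rw [← hco, EReal.coe_lt_coe_iff, hy]
          have h4 := min_le_right (w ω) (if xb ω = ⊤ then w ω else (xb ω).toReal - f ω)
          rw [if_neg ht] at h4
          rw [hdUp]; dsimp only; rw [if_neg ht]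
          have := min_le_left (w ω) ((xb ω).toReal - f ω)
          linarith [lt_min (hwpos ω) hcpos]
      · rw [hy]
        rw [abs_of_nonneg (by linarith)]
        linarith
  have hae : ∀ᵐ ω ∂μ,
      (xa ω < (y ω : EReal) ∧ (y ω : EReal) < xb ω) ∧ |y ω - f ω| ≤ w ω := by
    filter_upwards [hx, hab, hfx] with ω hω h2 h3
    rw [h3] at hω
    exact hkey ω hω.1 hω.2 h2
  have hmemh : MemLp (fun ω => y ω - f ω) p μ := by
    refine hwmem.of_le (hymeas.sub hfm).aestronglyMeasurable ?_
    filter_upwards [hae] with ω hω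
    rw [Real.norm_eq_abs, Real.norm_eq_abs, abs_of_pos (hwpos ω)]
    exact hω.2
  refine ⟨x + hmemh.toLp _, ?_⟩
  intro t ht0 ht1
  have hcoe : ⇑(x + hmemh.toLp _) =ᵐ[μ] y := by
    filter_upwards [Lp.coeFn_add x (hmemh.toLp _), hmemh.coeFn_toLp, hfx] with ω h1 h2 h3
    rw [h1, Pi.add_apply, h2, h3]; ring
  filter_upwards [hcoe, hae, hfx, hx] with ω h1 h2 h3 hx'
  rw [h1, h3]
  rw [h3] at hx'
  exact combo_aux hx'.1 hx'.2 h2.1.1 h2.1.2 ht0 ht1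

set_option synthInstance.maxHeartbeats 400000 in
theorem strict_box_set_dense
    {Ω : Type*} [MeasurableSpace Ω] (μ : Measure Ω) [SigmaFinite μ]
    (p : ℝ≥0∞) [Fact (1 ≤ p)] (hp : 1 ≤ p)
    (xa xb : Ω → EReal) (hxa : Measurable xa) (hxb : Measurable xb)
    (hab : ∀ᵐ ω ∂μ, xa ω < xb ω)
    (K Khat : Set (Lp ℝ p μ))
    (hK : K = {y : Lp ℝ p μ | ∀ᵐ ω ∂μ, xa ω ≤ (y ω : EReal) ∧ (y ω : EReal) ≤ xb ω})
    (hKhat : Khat = {y : Lp ℝ p μ | ∀ᵐ ω ∂μ, xa ω < (y ω : EReal) ∧ (y ω : EReal) < xb ω}) :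
    K ⊆ closure Khat ∧ (K.Nonempty → Khat.Nonempty) := by
  have key : ∀ x ∈ K, ∃ xh : Lp ℝ p μ, ∀ t : ℝ, 0 < t → t ≤ 1 →
      x + t • (xh - x) ∈ Khat := by
    intro x hxK
    rw [hK] at hxK
    obtain ⟨xh, hxh⟩ := exists_hat_aux hp xa xb hxa hxb hab x hxK
    refine ⟨xh, fun t ht0 ht1 => ?_⟩
    rw [hKhat]
    have hco : ⇑(x + t • (xh - x)) =ᵐ[μ] fun ω => x ω + t * (xh ω - x ω) := by
      filter_upwards [Lp.coeFn_add x (t • (xh - x)), Lp.coeFn_smul t (xh - x),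
        Lp.coeFn_sub xh x] with ω h1 h2 h3
      rw [h1, Pi.add_apply, h2, Pi.smul_apply, h3, Pi.sub_apply, smul_eq_mul]
    show ∀ᵐ ω ∂μ, _
    filter_upwards [hco, hxh t ht0 ht1] with ω h1 h2
    rw [h1]
    exact h2
  constructor
  · intro x hxK
    obtain ⟨xh, hxh⟩ := key x hxK
    have hmem : ∀ n : ℕ, x + ((2:ℝ)⁻¹ ^ n) • (xh - x) ∈ Khat := by
      intro n
      exact hxh _ (by positivity) (pow_le_one₀ (by norm_num) (by norm_num))
    have htend : Tendsto (fun n : ℕ => x + ((2:ℝ)⁻¹ ^ n) • (xh - x)) atTop (𝓝 x) := by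
      have h0 : Tendsto (fun n : ℕ => ((2:ℝ)⁻¹) ^ n) atTop (𝓝 0) :=
        tendsto_pow_atTop_nhds_zero_of_lt_one (by norm_num) (by norm_num)
      have := (h0.smul_const (xh - x)).const_add x
      simpa using this
    exact mem_closure_of_tendsto htend (Eventually.of_forall hmem)
  · rintro ⟨x, hxK⟩
    obtain ⟨xh, hxh⟩ := key x hxK
    exact ⟨_, hxh 1 one_pos le_rfl⟩
end
end
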